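/- arXiv:1911.03939 — 6 statements merged into one kernel-verified Lean document; each statement's English description precedes it below -/
import Mathlib

section
/- Let (H, L) be a quasi-abelian partial matched pair. Then the map Δ on the smash product L # H defined by Δ(x # h) = Σ (x₁ # h₁⁰) ⊗ (x₂h₁¹ # h₂) is multiplicative: Δ((x#h)(y#g)) = Δ(x#h)Δ(y#g), where the product on L # H is (x#h)(y#g) = Σ x(h₁⇀y) # h₂g. -/
open TensorProduct LinearMap

set_option synthInstance.maxHeartbeats 1000000
set_option maxHeartbeats 4000000

namespace PartialHopf

variable (k : Type*) [Field k]

section Action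

variable (H A : Type*) [Ring H] [HopfAlgebra k H] [Ring A] [Algebra k A]

/-- `A` is a left partial `H`-module algebra via the bilinear action `act`
(Definition 2.1 / Caenepeel-Janssen): `1 ⇀ a = a`,
`h ⇀ (ab) = Σ (h₁ ⇀ a)(h₂ ⇀ b)` and `h ⇀ (g ⇀ a) = Σ (h₁ ⇀ 1)(h₂g ⇀ a)`. -/
structure IsPartialAction (act : H →ₗ[k] A →ₗ[k] A) : Prop where
  one_act : ∀ a : A, act 1 a = a
  act_mul : ∀ (h : H) (a b : A), act h (a * b)
      = LinearMap.mul' k A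
          ((TensorProduct.map (act.flip a) (act.flip b)) (Coalgebra.comul (R := k) h))
  act_act : ∀ (h g : H) (a : A), act h (act g a)
      = LinearMap.mul' k A
          ((TensorProduct.map (act.flip 1) ((act.flip a) ∘ₗ (LinearMap.mulRight k g)))
            (Coalgebra.comul (R := k) h))

end Action

section Coaction

variable (H C : Type*) [Ring H] [HopfAlgebra k H]
  [AddCommGroup C] [Module k C] [Coalgebra k C]

/-- Auxiliary map sending `Σ c ⊗ d` to `Σ c⁰ ⊗ d⁰ ⊗ c¹d¹`. -/
noncomputable def coactPairMul (ρ : C →ₗ[k] C ⊗[k] H) :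
    C ⊗[k] C →ₗ[k] (C ⊗[k] C) ⊗[k] H :=
  (LinearMap.lTensor (C ⊗[k] C) (LinearMap.mul' k H))
    ∘ₗ (TensorProduct.tensorTensorTensorComm k C H C H).toLinearMap
    ∘ₗ (TensorProduct.map ρ ρ)

/-- Auxiliary map sending `c` to `Σ c₁⁰ ⊗ (c₁¹)₁ ⊗ (c₁¹)₂ ε_C(c₂⁰) c₂¹`. -/
noncomputable def coactRight (ρ : C →ₗ[k] C ⊗[k] H) : C →ₗ[k] (C ⊗[k] H) ⊗[k] H :=
  (TensorProduct.assoc k C H H).symm.toLinearMap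
    ∘ₗ (LinearMap.lTensor C
        ((LinearMap.lTensor H (LinearMap.mul' k H)) ∘ₗ (TensorProduct.assoc k H H H).toLinearMap))
    ∘ₗ (TensorProduct.assoc k C (H ⊗[k] H) H).toLinearMap
    ∘ₗ (TensorProduct.map ((LinearMap.lTensor C (Coalgebra.comul (R := k))) ∘ₗ ρ)
          ((TensorProduct.lid k H).toLinearMap
            ∘ₗ (LinearMap.rTensor H (Coalgebra.counit (R := k))) ∘ₗ ρ))
    ∘ₗ (Coalgebra.comul (R := k))

/-- `C` is a right partial `H`-comodule coalgebra via `ρ` (Definition 2.3 / Batista-Vercruysse):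
`(id ⊗ ε_H)ρ(c) = c`, `(Δ_C ⊗ id)ρ(c) = Σ c₁⁰ ⊗ c₂⁰ ⊗ c₁¹c₂¹` and
`(ρ ⊗ id)ρ(c) = Σ c₁⁰ ⊗ (c₁¹)₁ ⊗ (c₁¹)₂ ε_C(c₂⁰)c₂¹`. -/
structure IsPartialCoaction (ρ : C →ₗ[k] C ⊗[k] H) : Prop where
  tensor_counit : ∀ c : C,
    (TensorProduct.rid k C) ((LinearMap.lTensor C (Coalgebra.counit (R := k))) (ρ c)) = c
  comul_coact : ∀ c : C,
    (LinearMap.rTensor H (Coalgebra.comul (R := k))) (ρ c)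
      = coactPairMul k H C ρ (Coalgebra.comul (R := k) c)
  coact_coact : ∀ c : C,
    (LinearMap.rTensor H ρ) (ρ c) = coactRight k H C ρ c

end Coaction

end PartialHopf
namespace PartialHopf
variable (k : Type*) [Field k]

section MatchedPair

variable (H L : Type*) [Ring H] [HopfAlgebra k H] [Ring L] [HopfAlgebra k L]

/-- Generic swap `(m ⊗ n) ⊗ p ↦ (m ⊗ p) ⊗ n`. -/
noncomputable def swapR (M N P : Type*) [AddCommGroup M] [AddCommGroup N] [AddCommGroup P]
    [Module k M] [Module k N] [Module k P] :
    (M ⊗[k] N) ⊗[k] P →ₗ[k] (M ⊗[k] P) ⊗[k] N :=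
  (TensorProduct.assoc k M P N).symm.toLinearMap
    ∘ₗ (LinearMap.lTensor M (TensorProduct.comm k N P).toLinearMap)
    ∘ₗ (TensorProduct.assoc k M N P).toLinearMap

variable {H L}

/-- The bilinear action as a map on the tensor product. -/
noncomputable def actT (act : H →ₗ[k] L →ₗ[k] L) : H ⊗[k] L →ₗ[k] L :=
  TensorProduct.lift act

/-- Shuffle `(x₁ ⊗ x₂) ⊗ (a ⊗ y) ↦ a ⊗ (x₁ ⊗ x₂y)`. -/
noncomputable def psiMap : (L ⊗[k] L) ⊗[k] (H ⊗[k] L) →ₗ[k] H ⊗[k] (L ⊗[k] L) :=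
  (TensorProduct.assoc k H L L).toLinearMap
    ∘ₗ (TensorProduct.map (TensorProduct.comm k L H).toLinearMap (LinearMap.mul' k L))
    ∘ₗ (TensorProduct.tensorTensorTensorComm k L L H L).toLinearMap

/-- `h ↦ Σ (h₂g)⁰ ⊗ (h₁ ⇀ x)₁ ⊗ (h₁ ⇀ x)₂ (h₂g)¹`: the left hand side of the
compatibility condition (iii) of a partial matched pair. -/
noncomputable def mpLHS (act : H →ₗ[k] L →ₗ[k] L) (ρ : H →ₗ[k] H ⊗[k] L) (g : H) (x : L) :
    H →ₗ[k] H ⊗[k] (L ⊗[k] L) :=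
  psiMap k ∘ₗ (TensorProduct.map ((Coalgebra.comul (R := k)) ∘ₗ act.flip x)
      (ρ ∘ₗ LinearMap.mulRight k g)) ∘ₗ (Coalgebra.comul (R := k))

/-- `h ⊗ x ↦ (h⁰ ⇀ x) ⊗ h¹`. -/
noncomputable def phiB (act : H →ₗ[k] L →ₗ[k] L) (ρ : H →ₗ[k] H ⊗[k] L) :
    H ⊗[k] L →ₗ[k] L ⊗[k] L :=
  (LinearMap.rTensor L (actT k act)) ∘ₗ (swapR k H L L) ∘ₗ (LinearMap.rTensor L ρ)

/-- `(h₁ ⊗ h₂) ⊗ (x₁ ⊗ x₂) ↦ (h₁⁰ ⇀ x₁) ⊗ h₁¹(h₂ ⇀ x₂)`. -/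
noncomputable def bAssemble (act : H →ₗ[k] L →ₗ[k] L) (ρ : H →ₗ[k] H ⊗[k] L) :
    (H ⊗[k] H) ⊗[k] (L ⊗[k] L) →ₗ[k] L ⊗[k] L :=
  (LinearMap.lTensor L (LinearMap.mul' k L))
    ∘ₗ (TensorProduct.assoc k L L L).toLinearMap
    ∘ₗ (TensorProduct.map (phiB k act ρ) (actT k act))
    ∘ₗ (TensorProduct.tensorTensorTensorComm k H H L L).toLinearMap

/-- `h ↦ Σ (h₁⁰ ⇀ x₁) ⊗ h₁¹(h₂ ⇀ x₂)`. -/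
noncomputable def betaMap (act : H →ₗ[k] L →ₗ[k] L) (ρ : H →ₗ[k] H ⊗[k] L) (x : L) :
    H →ₗ[k] L ⊗[k] L :=
  (bAssemble k act ρ)
    ∘ₗ ((TensorProduct.mk k (H ⊗[k] H) (L ⊗[k] L)).flip (Coalgebra.comul (R := k) x))
    ∘ₗ (Coalgebra.comul (R := k))

/-- `h₁ ⊗ g ↦ h₁⁰g ⊗ h₁¹`. -/
noncomputable def phiC (ρ : H →ₗ[k] H ⊗[k] L) : H ⊗[k] H →ₗ[k] H ⊗[k] L :=
  (LinearMap.rTensor L (LinearMap.mul' k H)) ∘ₗ (swapR k H L H) ∘ₗ (LinearMap.rTensor H ρ)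

/-- `(h₁ ⊗ h₂) ⊗ (g⁰ ⊗ g¹) ↦ h₁⁰g⁰ ⊗ h₁¹(h₂ ⇀ g¹)`. -/
noncomputable def cAssemble (act : H →ₗ[k] L →ₗ[k] L) (ρ : H →ₗ[k] H ⊗[k] L) :
    (H ⊗[k] H) ⊗[k] (H ⊗[k] L) →ₗ[k] H ⊗[k] L :=
  (LinearMap.lTensor H (LinearMap.mul' k L))
    ∘ₗ (TensorProduct.assoc k H L L).toLinearMap
    ∘ₗ (TensorProduct.map (phiC k ρ) (actT k act))
    ∘ₗ (TensorProduct.tensorTensorTensorComm k H H H L).toLinearMap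

/-- `h ↦ Σ h₁⁰g⁰ ⊗ h₁¹(h₂ ⇀ g¹)`. -/
noncomputable def gammaMap (act : H →ₗ[k] L →ₗ[k] L) (ρ : H →ₗ[k] H ⊗[k] L) (g : H) :
    H →ₗ[k] H ⊗[k] L :=
  (cAssemble k act ρ)
    ∘ₗ ((TensorProduct.mk k (H ⊗[k] H) (H ⊗[k] L)).flip (ρ g))
    ∘ₗ (Coalgebra.comul (R := k))

/-- `h ↦ Σ h₃⁰g⁰ ⊗ (h₁⁰ ⇀ x₁) ⊗ h₁¹(h₂ ⇀ x₂)h₃¹(h₄ ⇀ g¹)`: the right hand side of the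
compatibility condition (iii) of a partial matched pair. -/
noncomputable def mpRHS (act : H →ₗ[k] L →ₗ[k] L) (ρ : H →ₗ[k] H ⊗[k] L) (g : H) (x : L) :
    H →ₗ[k] H ⊗[k] (L ⊗[k] L) :=
  psiMap k ∘ₗ (TensorProduct.map (betaMap k act ρ x) (gammaMap k act ρ g))
    ∘ₗ (Coalgebra.comul (R := k))

/-- `h ↦ Σ ε_H(h⁰) h¹`. -/
noncomputable def coactCounit (ρ : H →ₗ[k] H ⊗[k] L) : H →ₗ[k] L :=
  (TensorProduct.lid k L).toLinearMap
    ∘ₗ (LinearMap.rTensor L (Coalgebra.counit (R := k))) ∘ₗ ρ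

variable (H L)

/-- Definition 3.1: `(H, L)` is a partial matched pair of Hopf algebras. -/
structure IsPartialMatchedPair (act : H →ₗ[k] L →ₗ[k] L) (ρ : H →ₗ[k] H ⊗[k] L) : Prop where
  action : IsPartialAction k H L act
  coaction : IsPartialCoaction k L H ρ
  compat : ∀ (h g : H) (x : L), mpLHS k act ρ g x h = mpRHS k act ρ g x h
  counit_act : ∀ (h : H) (x : L),
    Coalgebra.counit (R := k) (act h x)
      = Coalgebra.counit (R := k) (act h 1) * Coalgebra.counit (R := k) x
  coact_one : ρ 1 = (1 : H) ⊗ₜ[k] (coactCounit k ρ (1 : H))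

/-- Definition 3.5: quasi-abelian condition
`Σ h₂⁰ ⊗ (h₁ ⇀ x)h₂¹ = Σ h₁⁰ ⊗ h₁¹(h₂ ⇀ x)`. -/
def IsQuasiAbelian (act : H →ₗ[k] L →ₗ[k] L) (ρ : H →ₗ[k] H ⊗[k] L) : Prop :=
  ∀ (h : H) (x : L),
    ((LinearMap.lTensor H (LinearMap.mul' k L))
        ∘ₗ (TensorProduct.assoc k H L L).toLinearMap
        ∘ₗ (LinearMap.rTensor L (TensorProduct.comm k L H).toLinearMap)
        ∘ₗ (TensorProduct.assoc k L H L).symm.toLinearMap)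
      ((TensorProduct.map (act.flip x) ρ) (Coalgebra.comul (R := k) h))
    = ((LinearMap.lTensor H (LinearMap.mul' k L))
        ∘ₗ (TensorProduct.assoc k H L L).toLinearMap)
      ((TensorProduct.map ρ (act.flip x)) (Coalgebra.comul (R := k) h))

end MatchedPair

section SmashProduct

variable {k H L : Type*} [Field k] [Ring H] [HopfAlgebra k H] [Ring L] [HopfAlgebra k L]

/-- `(x ⊗ h₁) ⊗ y ↦ x(h₁ ⇀ y)`. -/
noncomputable def smashQ (act : H →ₗ[k] L →ₗ[k] L) : (L ⊗[k] H) ⊗[k] L →ₗ[k] L :=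
  (LinearMap.mul' k L) ∘ₗ (LinearMap.lTensor L (actT k act))
    ∘ₗ (TensorProduct.assoc k L H L).toLinearMap

/-- The smash product multiplication on `L ⊗ H`:
`(x ⊗ h) ⊗ (y ⊗ g) ↦ Σ x(h₁ ⇀ y) ⊗ h₂g`. -/
noncomputable def smashMul (act : H →ₗ[k] L →ₗ[k] L) :
    (L ⊗[k] H) ⊗[k] (L ⊗[k] H) →ₗ[k] L ⊗[k] H :=
  (LinearMap.rTensor H (smashQ act))
    ∘ₗ (TensorProduct.assoc k (L ⊗[k] H) L H).symm.toLinearMap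
    ∘ₗ (TensorProduct.tensorTensorTensorComm k L H L H).symm.toLinearMap
    ∘ₗ (LinearMap.lTensor (L ⊗[k] L)
          ((LinearMap.lTensor H (LinearMap.mul' k H))
            ∘ₗ (TensorProduct.assoc k H H H).toLinearMap))
    ∘ₗ (TensorProduct.tensorTensorTensorComm k L (H ⊗[k] H) L H).toLinearMap
    ∘ₗ (LinearMap.rTensor (L ⊗[k] H) (LinearMap.lTensor L (Coalgebra.comul (R := k))))

/-- `w ⊗ (x₂ ⊗ h₂) ↦ x₂w ⊗ h₂`. -/
noncomputable def smashR : L ⊗[k] (L ⊗[k] H) →ₗ[k] L ⊗[k] H :=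
  (LinearMap.rTensor H ((LinearMap.mul' k L) ∘ₗ (TensorProduct.comm k L L).toLinearMap))
    ∘ₗ (TensorProduct.assoc k L L H).symm.toLinearMap

/-- The smash coproduct comultiplication on `L ⊗ H`:
`x ⊗ h ↦ Σ (x₁ ⊗ h₁⁰) ⊗ (x₂h₁¹ ⊗ h₂)`. -/
noncomputable def smashComul (ρ : H →ₗ[k] H ⊗[k] L) :
    L ⊗[k] H →ₗ[k] (L ⊗[k] H) ⊗[k] (L ⊗[k] H) :=
  (LinearMap.lTensor (L ⊗[k] H) smashR)
    ∘ₗ (TensorProduct.assoc k (L ⊗[k] H) L (L ⊗[k] H)).toLinearMap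
    ∘ₗ (LinearMap.rTensor (L ⊗[k] H) (TensorProduct.assoc k L H L).symm.toLinearMap)
    ∘ₗ (TensorProduct.tensorTensorTensorComm k L L (H ⊗[k] L) H).toLinearMap
    ∘ₗ (TensorProduct.map (Coalgebra.comul (R := k))
          ((LinearMap.rTensor H ρ) ∘ₗ (Coalgebra.comul (R := k))))

noncomputable def Theta : (L ⊗[k] L) ⊗[k] ((H ⊗[k] L) ⊗[k] H) →ₗ[k] (L ⊗[k] H) ⊗[k] (L ⊗[k] H) :=
  (LinearMap.lTensor (L ⊗[k] H) smashR)
    ∘ₗ (TensorProduct.assoc k (L ⊗[k] H) L (L ⊗[k] H)).toLinearMap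
    ∘ₗ (LinearMap.rTensor (L ⊗[k] H) (TensorProduct.assoc k L H L).symm.toLinearMap)
    ∘ₗ (TensorProduct.tensorTensorTensorComm k L L (H ⊗[k] L) H).toLinearMap

lemma smashComul_tmul (ρ : H →ₗ[k] H ⊗[k] L) (z : L) (u : H) :
    smashComul ρ (z ⊗ₜ[k] u)
      = Theta ((Coalgebra.comul (R := k) z) ⊗ₜ[k]
          ((LinearMap.rTensor H ρ) (Coalgebra.comul (R := k) u))) := by
  simp [smashComul, Theta]

lemma Theta_tmul (x1 x2 : L) (w0 : H) (w1 : L) (u2 : H) :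
    Theta ((x1 ⊗ₜ[k] x2) ⊗ₜ[k] ((w0 ⊗ₜ[k] w1) ⊗ₜ[k] u2))
      = (x1 ⊗ₜ[k] w0) ⊗ₜ[k] ((x2 * w1) ⊗ₜ[k] u2) := by
  simp [Theta, smashR, TensorProduct.tensorTensorTensorComm_tmul]

open Coalgebra in
lemma smashMul_tmul (act : H →ₗ[k] L →ₗ[k] L) (x y : L) (h g : H) (rh : Coalgebra.Repr k h (H × H)) :
    smashMul act ((x ⊗ₜ[k] h) ⊗ₜ[k] (y ⊗ₜ[k] g))
      = ∑ i ∈ rh.index, (x * act (rh.left i) y) ⊗ₜ[k] (rh.right i * g) := by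
  simp only [smashMul, LinearMap.comp_apply, LinearMap.rTensor_tmul, LinearMap.lTensor_tmul]
  rw [← rh.eq]
  simp [TensorProduct.sum_tmul, TensorProduct.tmul_sum, map_sum, smashQ, actT,
    TensorProduct.tensorTensorTensorComm_tmul]

/-- Continuation map: `w ⊗ (a ⊗ b) ↦ (X1·a ⊗ w) ⊗ (X2·b ⊗ u)`. -/
noncomputable def PhiC (X1 X2 : L) (u : H) : H ⊗[k] (L ⊗[k] L) →ₗ[k] (L ⊗[k] H) ⊗[k] (L ⊗[k] H) :=
  (LinearMap.rTensor (L ⊗[k] H) (TensorProduct.comm k H L).toLinearMap)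
    ∘ₗ (TensorProduct.assoc k H L (L ⊗[k] H)).symm.toLinearMap
    ∘ₗ (LinearMap.lTensor H (TensorProduct.map (LinearMap.mulLeft k X1)
        (((TensorProduct.mk k L H).flip u) ∘ₗ (LinearMap.mulLeft k X2))))

lemma PhiC_tmul (X1 X2 : L) (u : H) (w : H) (a b : L) :
    PhiC X1 X2 u (w ⊗ₜ[k] (a ⊗ₜ[k] b)) = ((X1 * a) ⊗ₜ[k] w) ⊗ₜ[k] ((X2 * b) ⊗ₜ[k] u) := by
  simp [PhiC]

lemma psiMap_tmul (a1 a2 : L) (w : H) (l : L) :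
    psiMap k ((a1 ⊗ₜ[k] a2) ⊗ₜ[k] (w ⊗ₜ[k] l)) = w ⊗ₜ[k] (a1 ⊗ₜ[k] (a2 * l)) := by
  simp [psiMap, TensorProduct.tensorTensorTensorComm_tmul]

lemma keyL (X1 X2 : L) (u : H) (M : L ⊗[k] L) (R : H ⊗[k] L) :
    Theta (((X1 ⊗ₜ[k] X2) * M) ⊗ₜ[k] (R ⊗ₜ[k] u))
      = PhiC X1 X2 u (psiMap k (M ⊗ₜ[k] R)) := by
  induction M using TensorProduct.induction_on with
  | zero => rw [mul_zero]; simp only [TensorProduct.zero_tmul, map_zero]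
  | tmul a b =>
    induction R using TensorProduct.induction_on with
    | zero => simp only [TensorProduct.zero_tmul, TensorProduct.tmul_zero, map_zero]
    | tmul w l => simp [Algebra.TensorProduct.tmul_mul_tmul, Theta_tmul, psiMap_tmul,
        PhiC_tmul, mul_assoc]
    | add R1 R2 h1 h2 => simp only [TensorProduct.tmul_add, TensorProduct.add_tmul, map_add,
        h1, h2]
  | add M1 M2 h1 h2 => simp only [mul_add, TensorProduct.add_tmul, TensorProduct.tmul_add,
      map_add, h1, h2]

/-- Continuation for the coassociativity shuffle in route L. -/
noncomputable def Fc (act : H →ₗ[k] L →ₗ[k] L) (ρ : H →ₗ[k] H ⊗[k] L) (y : L)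
    (X : L ⊗[k] L) (G1 G2 : H) :
    H ⊗[k] (H ⊗[k] H) →ₗ[k] (L ⊗[k] H) ⊗[k] (L ⊗[k] H) :=
  Theta ∘ₗ (TensorProduct.map
    ((LinearMap.mulLeft k X) ∘ₗ (Coalgebra.comul (R := k)) ∘ₗ (act.flip y))
    (TensorProduct.map (ρ ∘ₗ (LinearMap.mulRight k G1)) (LinearMap.mulRight k G2)))

lemma Fc_tmul (act : H →ₗ[k] L →ₗ[k] L) (ρ : H →ₗ[k] H ⊗[k] L) (y : L)
    (X : L ⊗[k] L) (G1 G2 : H) (w1 w2 w3 : H) :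
    Fc act ρ y X G1 G2 (w1 ⊗ₜ[k] (w2 ⊗ₜ[k] w3))
      = Theta ((X * Coalgebra.comul (R := k) (act w1 y)) ⊗ₜ[k]
          (ρ (w2 * G1) ⊗ₜ[k] (w3 * G2))) := by
  simp [Fc]

lemma mpLHS_expand (act : H →ₗ[k] L →ₗ[k] L) (ρ : H →ₗ[k] H ⊗[k] L) (G : H) (xx : L)
    (h' : H) (r : Coalgebra.Repr k h' (H × H)) :
    mpLHS k act ρ G xx h' = ∑ p ∈ r.index,
      psiMap k ((Coalgebra.comul (R := k) (act (r.left p) xx)) ⊗ₜ[k] (ρ (r.right p * G))) := by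
  simp only [mpLHS, LinearMap.comp_apply]
  rw [← r.eq]
  simp [map_sum]

open Coalgebra in
lemma routeL (act : H →ₗ[k] L →ₗ[k] L) (ρ : H →ₗ[k] H ⊗[k] L)
    (x y : L) (h g : H) (rx : Repr k x (L × L)) (rh : Repr k h (H × H)) (rg : Repr k g (H × H))
    (rA : (i : H × H) → Repr k (rh.left i) (H × H)) (rB : (i : H × H) → Repr k (rh.right i) (H × H)) :
    smashComul ρ (smashMul act ((x ⊗ₜ[k] h) ⊗ₜ[k] (y ⊗ₜ[k] g)))
      = ∑ j ∈ rx.index, ∑ q ∈ rg.index, ∑ i ∈ rh.index,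
          PhiC (rx.left j) (rx.right j) (rh.right i * rg.right q)
            (mpLHS k act ρ (rg.left q) y (rh.left i)) := by
  rw [smashMul_tmul act x y h g rh, map_sum]
  have e1 : ∀ i ∈ rh.index,
      smashComul ρ ((x * act (rh.left i) y) ⊗ₜ[k] (rh.right i * g))
        = ∑ j ∈ rx.index, ∑ v ∈ (rB i).index, ∑ q ∈ rg.index,
            Fc act ρ y (rx.left j ⊗ₜ[k] rx.right j) (rg.left q) (rg.right q)
              (rh.left i ⊗ₜ[k] ((rB i).left v ⊗ₜ[k] (rB i).right v)) := by
    intro i _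
    rw [smashComul_tmul, Bialgebra.comul_mul, Bialgebra.comul_mul,
      ← rx.eq, ← (rB i).eq, ← rg.eq, Finset.sum_mul, Finset.sum_mul_sum]
    simp only [Fc_tmul, Algebra.TensorProduct.tmul_mul_tmul, map_sum,
      TensorProduct.sum_tmul, TensorProduct.tmul_sum, LinearMap.rTensor_tmul]
    exact (Finset.sum_congr rfl fun v _ => Finset.sum_comm).trans Finset.sum_comm
  rw [Finset.sum_congr rfl e1]
  rw [Finset.sum_comm]
  refine Finset.sum_congr rfl fun j _ => ?_
  have swap1 : ∀ (F : (i : H × H) → H × H → H × H → (L ⊗[k] H) ⊗[k] (L ⊗[k] H)),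
      (∑ i ∈ rh.index, ∑ v ∈ (rB i).index, ∑ q ∈ rg.index, F i v q)
        = ∑ q ∈ rg.index, ∑ i ∈ rh.index, ∑ v ∈ (rB i).index, F i v q := by
    intro F
    rw [show (∑ i ∈ rh.index, ∑ v ∈ (rB i).index, ∑ q ∈ rg.index, F i v q)
        = ∑ i ∈ rh.index, ∑ q ∈ rg.index, ∑ v ∈ (rB i).index, F i v q from
      Finset.sum_congr rfl fun i _ => Finset.sum_comm]
    exact Finset.sum_comm
  rw [swap1]
  refine Finset.sum_congr rfl fun q _ => ?_
  have shuffle :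
      ∑ i ∈ rh.index, ∑ v ∈ (rB i).index,
          Fc act ρ y (rx.left j ⊗ₜ[k] rx.right j) (rg.left q) (rg.right q)
            (rh.left i ⊗ₜ[k] ((rB i).left v ⊗ₜ[k] (rB i).right v))
        = ∑ i ∈ rh.index, ∑ p ∈ (rA i).index,
          Fc act ρ y (rx.left j ⊗ₜ[k] rx.right j) (rg.left q) (rg.right q)
            ((rA i).left p ⊗ₜ[k] ((rA i).right p ⊗ₜ[k] rh.right i)) := by
    have hco := Coalgebra.sum_tmul_tmul_eq rh rA rB
    have h2 := congrArg (Fc act ρ y (rx.left j ⊗ₜ[k] rx.right j) (rg.left q) (rg.right q)) hco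
    simpa only [map_sum] using h2.symm
  rw [shuffle]
  refine Finset.sum_congr rfl fun i _ => ?_
  rw [mpLHS_expand act ρ (rg.left q) y (rh.left i) (rA i), map_sum]
  refine Finset.sum_congr rfl fun p _ => ?_
  rw [Fc_tmul, keyL]

section RouteR

variable (act : H →ₗ[k] L →ₗ[k] L) (ρ : H →ₗ[k] H ⊗[k] L)

/-- `w2 ⊗ w3 ↦ Σ w2⁰ ⊗ w2¹·(w3 ⇀ v)` (the `mpRHS`-side quasi-abelian pattern). -/
noncomputable def BLr (v : L) : H ⊗[k] H →ₗ[k] H ⊗[k] L :=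
  (LinearMap.lTensor H (LinearMap.mul' k L))
    ∘ₗ (TensorProduct.assoc k H L L).toLinearMap
    ∘ₗ (TensorProduct.map ρ (act.flip v))

/-- `w2 ⊗ w3 ↦ Σ w3⁰ ⊗ (w2 ⇀ v)·w3¹` (the `mpLHS`-side quasi-abelian pattern). -/
noncomputable def BLl (v : L) : H ⊗[k] H →ₗ[k] H ⊗[k] L :=
  (LinearMap.lTensor H (LinearMap.mul' k L))
    ∘ₗ (TensorProduct.assoc k H L L).toLinearMap
    ∘ₗ (LinearMap.rTensor L (TensorProduct.comm k L H).toLinearMap)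
    ∘ₗ (TensorProduct.assoc k L H L).symm.toLinearMap
    ∘ₗ (TensorProduct.map (act.flip v) ρ)

lemma qa_pair (hqa : IsQuasiAbelian k H L act ρ) (ζ : H) (v : L) :
    BLr act ρ v (Coalgebra.comul (R := k) ζ) = BLl act ρ v (Coalgebra.comul (R := k) ζ) := by
  have := (hqa ζ v).symm
  simpa only [BLr, BLl, LinearMap.comp_apply] using this

/-- first-factor assembler: `(d0 ⊗ e0) ⊗ r0 ↦ (X1·(d0 ⇀ Y1)) ⊗ (e0·r0)`. -/
noncomputable def muOne (X1 Y1 : L) : (H ⊗[k] H) ⊗[k] H →ₗ[k] L ⊗[k] H :=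
  (TensorProduct.map ((LinearMap.mulLeft k X1) ∘ₗ (act.flip Y1)) (LinearMap.mul' k H))
    ∘ₗ (TensorProduct.assoc k H H H).toLinearMap

lemma muOne_tmul (X1 Y1 : L) (d0 e0 r0 : H) :
    muOne act X1 Y1 ((d0 ⊗ₜ[k] e0) ⊗ₜ[k] r0) = (X1 * act d0 Y1) ⊗ₜ[k] (e0 * r0) := by
  simp [muOne]

/-- second-factor assembler:
`((d1 ⊗ l2) ⊗ (w4 ⊗ b')) ⊗ r1 ↦ (X2·((d1·l2)·(w4 ⇀ r1))) ⊗ b'`. -/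
noncomputable def muTwo (X2 : L) : ((L ⊗[k] L) ⊗[k] (H ⊗[k] H)) ⊗[k] L →ₗ[k] L ⊗[k] H :=
  (LinearMap.rTensor H ((LinearMap.mulLeft k X2) ∘ₗ (LinearMap.mul' k L)
      ∘ₗ (LinearMap.lTensor L (actT k act)) ∘ₗ (TensorProduct.assoc k L H L).toLinearMap))
    ∘ₗ (swapR k (L ⊗[k] H) H L)
    ∘ₗ (LinearMap.rTensor L (TensorProduct.assoc k L H H).symm.toLinearMap)
    ∘ₗ (LinearMap.rTensor L (TensorProduct.map (LinearMap.mul' k L) LinearMap.id))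

lemma muTwo_tmul (X2 d1 l2 : L) (w4 b' : H) (r1 : L) :
    muTwo act X2 (((d1 ⊗ₜ[k] l2) ⊗ₜ[k] (w4 ⊗ₜ[k] b')) ⊗ₜ[k] r1)
      = (X2 * ((d1 * l2) * act w4 r1)) ⊗ₜ[k] b' := by
  simp [muTwo, swapR, actT]

/-- The main route-R assembler.  On wires
`((w1 ⊗ (e0 ⊗ l2)) ⊗ (w4 ⊗ w5)) ⊗ (r0 ⊗ r1)` it produces
`Σ (X1·(w1⁰ ⇀ Y1) ⊗ e0·r0) ⊗ (X2·((w1¹·l2)·(w4 ⇀ r1)) ⊗ w5·G2c)`. -/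
noncomputable def OmegaR (X1 X2 Y1 : L) (G2c : H) :
    ((H ⊗[k] (H ⊗[k] L)) ⊗[k] (H ⊗[k] H)) ⊗[k] (H ⊗[k] L)
      →ₗ[k] (L ⊗[k] H) ⊗[k] (L ⊗[k] H) :=
  (TensorProduct.map (muOne act X1 Y1) (muTwo act X2))
    ∘ₗ (TensorProduct.tensorTensorTensorComm k (H ⊗[k] H) ((L ⊗[k] L) ⊗[k] (H ⊗[k] H)) H L).toLinearMap
    ∘ₗ (LinearMap.rTensor (H ⊗[k] L) (TensorProduct.assoc k (H ⊗[k] H) (L ⊗[k] L) (H ⊗[k] H)).toLinearMap)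
    ∘ₗ (LinearMap.rTensor (H ⊗[k] L)
        (LinearMap.rTensor (H ⊗[k] H) (TensorProduct.tensorTensorTensorComm k H L H L).toLinearMap))
    ∘ₗ (LinearMap.rTensor (H ⊗[k] L)
        (TensorProduct.map (TensorProduct.map ρ LinearMap.id)
          (LinearMap.lTensor H (LinearMap.mulRight k G2c))))

/-- evaluation core of `OmegaR` in the `ρ w1` wire. -/
noncomputable def OmegaRcore (X1 X2 Y1 : L) (G2c : H) (e0 : H) (l2 : L) (w4 w5 : H)
    (r0 : H) (r1 : L) : H ⊗[k] L →ₗ[k] (L ⊗[k] H) ⊗[k] (L ⊗[k] H) :=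
  TensorProduct.map
    (((TensorProduct.mk k L H).flip (e0 * r0)) ∘ₗ (LinearMap.mulLeft k X1) ∘ₗ (act.flip Y1))
    (((TensorProduct.mk k L H).flip (w5 * G2c)) ∘ₗ (LinearMap.mulLeft k X2)
      ∘ₗ (LinearMap.mulRight k (act w4 r1)) ∘ₗ (LinearMap.mulRight k l2))

lemma OmegaRcore_tmul (X1 X2 Y1 : L) (G2c : H) (e0 : H) (l2 : L) (w4 w5 : H)
    (r0 : H) (r1 : L) (d0 : H) (d1 : L) :
    OmegaRcore act X1 X2 Y1 G2c e0 l2 w4 w5 r0 r1 (d0 ⊗ₜ[k] d1)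
      = ((X1 * act d0 Y1) ⊗ₜ[k] (e0 * r0)) ⊗ₜ[k] ((X2 * ((d1 * l2) * act w4 r1)) ⊗ₜ[k] (w5 * G2c)) := by
  simp [OmegaRcore]

lemma OmegaR_apply (X1 X2 Y1 : L) (G2c : H) (w1 e0 : H) (l2 : L) (w4 w5 : H)
    (r0 : H) (r1 : L) :
    OmegaR act ρ X1 X2 Y1 G2c (((w1 ⊗ₜ[k] (e0 ⊗ₜ[k] l2)) ⊗ₜ[k] (w4 ⊗ₜ[k] w5)) ⊗ₜ[k] (r0 ⊗ₜ[k] r1))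
      = OmegaRcore act X1 X2 Y1 G2c e0 l2 w4 w5 r0 r1 (ρ w1) := by
  simp only [OmegaR, LinearMap.comp_apply, LinearMap.rTensor_tmul, TensorProduct.map_tmul,
    LinearMap.lTensor_tmul, LinearMap.id_coe, id_eq, LinearMap.mulRight_apply]
  induction (ρ w1) using TensorProduct.induction_on with
  | zero => simp only [TensorProduct.zero_tmul, map_zero]
  | tmul d0 d1 =>
    simp [TensorProduct.tensorTensorTensorComm_tmul, muOne_tmul, muTwo_tmul, OmegaRcore_tmul]
  | add u v hu hv =>
    simp only [TensorProduct.add_tmul, map_add, hu, hv]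

/-- `b1 ⊗ r1 ↦ b1 ⇀ (Y2·r1)`. -/
noncomputable def nuAct (Y2 : L) : H ⊗[k] L →ₗ[k] L :=
  (actT k act) ∘ₗ (LinearMap.lTensor H (LinearMap.mulLeft k Y2))

/-- `(b1 ⊗ b2) ⊗ (l ⊗ r1) ↦ (X2·(l·(b1 ⇀ (Y2·r1)))) ⊗ (b2·gB)`. -/
noncomputable def muTwoC (X2 Y2 : L) (gB : H) : (H ⊗[k] H) ⊗[k] (L ⊗[k] L) →ₗ[k] L ⊗[k] H :=
  (LinearMap.rTensor H (LinearMap.mulLeft k X2))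
    ∘ₗ (TensorProduct.map ((LinearMap.mul' k L) ∘ₗ (TensorProduct.comm k L L).toLinearMap)
        (LinearMap.mulRight k gB))
    ∘ₗ (TensorProduct.assoc k L L H).symm.toLinearMap
    ∘ₗ (LinearMap.lTensor L (TensorProduct.comm k H L).toLinearMap)
    ∘ₗ (TensorProduct.map (nuAct act Y2) (LinearMap.id (M := H ⊗[k] L)))
    ∘ₗ (TensorProduct.tensorTensorTensorComm k H H L L).toLinearMap
    ∘ₗ (LinearMap.lTensor (H ⊗[k] H) (TensorProduct.comm k L L).toLinearMap)

lemma muTwoC_tmul (X2 Y2 : L) (gB : H) (b1 b2 : H) (l r1 : L) :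
    muTwoC act X2 Y2 gB ((b1 ⊗ₜ[k] b2) ⊗ₜ[k] (l ⊗ₜ[k] r1))
      = (X2 * (l * act b1 (Y2 * r1))) ⊗ₜ[k] (b2 * gB) := by
  simp [muTwoC, nuAct, actT, TensorProduct.tensorTensorTensorComm_tmul]

/-- The stage map after the first reduction of route R. On
`((c1⊗c2)⊗l) ⊗ ((b1⊗b2)⊗(r0⊗r1))` it gives
`(X1·(c1⇀Y1) ⊗ c2·r0) ⊗ ((X2·(l·(b1⇀(Y2·r1)))) ⊗ b2·gB)`. -/
noncomputable def OmegaCmap (X1 X2 Y1 Y2 : L) (gB : H) :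
    ((H ⊗[k] H) ⊗[k] L) ⊗[k] ((H ⊗[k] H) ⊗[k] (H ⊗[k] L))
      →ₗ[k] (L ⊗[k] H) ⊗[k] (L ⊗[k] H) :=
  (TensorProduct.map (muOne act X1 Y1) (muTwoC act X2 Y2 gB))
    ∘ₗ (TensorProduct.tensorTensorTensorComm k (H ⊗[k] H) (H ⊗[k] H) H (L ⊗[k] L)).toLinearMap
    ∘ₗ (LinearMap.lTensor ((H ⊗[k] H) ⊗[k] (H ⊗[k] H))
        ((TensorProduct.assoc k H L L).toLinearMap
          ∘ₗ (LinearMap.rTensor L (TensorProduct.comm k L H).toLinearMap)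
          ∘ₗ (TensorProduct.assoc k L H L).symm.toLinearMap))
    ∘ₗ (TensorProduct.tensorTensorTensorComm k (H ⊗[k] H) L (H ⊗[k] H) (H ⊗[k] L)).toLinearMap

lemma OmegaCmap_tmul (X1 X2 Y1 Y2 : L) (gB : H) (c1 c2 : H) (l : L) (b1 b2 : H)
    (r0 : H) (r1 : L) :
    OmegaCmap act X1 X2 Y1 Y2 gB (((c1 ⊗ₜ[k] c2) ⊗ₜ[k] l) ⊗ₜ[k] ((b1 ⊗ₜ[k] b2) ⊗ₜ[k] (r0 ⊗ₜ[k] r1)))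
      = ((X1 * act c1 Y1) ⊗ₜ[k] (c2 * r0)) ⊗ₜ[k] ((X2 * (l * act b1 (Y2 * r1))) ⊗ₜ[k] (b2 * gB)) := by
  simp [OmegaCmap, TensorProduct.tensorTensorTensorComm_tmul, muOne_tmul, muTwoC_tmul]

/-- `smashMul` on a pure tensor with the comultiplication kept symbolic. -/
lemma smashMul_tmulK (act : H →ₗ[k] L →ₗ[k] L) (a c : L) (b d : H) :
    smashMul act ((a ⊗ₜ[k] b) ⊗ₜ[k] (c ⊗ₜ[k] d))
      = (TensorProduct.map ((LinearMap.mulLeft k a) ∘ₗ (act.flip c)) (LinearMap.mulRight k d))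
          (Coalgebra.comul (R := k) b) := by
  simp only [smashMul, LinearMap.comp_apply, LinearMap.rTensor_tmul, LinearMap.lTensor_tmul]
  induction (Coalgebra.comul (R := k) b) using TensorProduct.induction_on with
  | zero => simp only [TensorProduct.tmul_zero, TensorProduct.zero_tmul, map_zero]
  | tmul b1 b2 => simp [smashQ, actT, TensorProduct.tensorTensorTensorComm_tmul]
  | add u v hu hv => simp only [TensorProduct.tmul_add, TensorProduct.add_tmul, map_add, hu, hv]

/-- Step C of route R: the product of two smash-coproduct legs, expressed via `OmegaCmap`. -/
lemma stepC (X1 X2 Y1 Y2 : L) (bH gB : H) (RH RG : H ⊗[k] L) :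
    (TensorProduct.map (smashMul act) (smashMul act))
      ((TensorProduct.tensorTensorTensorComm k (L ⊗[k] H) (L ⊗[k] H) (L ⊗[k] H) (L ⊗[k] H))
        ((Theta ((X1 ⊗ₜ[k] X2) ⊗ₜ[k] (RH ⊗ₜ[k] bH)))
          ⊗ₜ[k] (Theta ((Y1 ⊗ₜ[k] Y2) ⊗ₜ[k] (RG ⊗ₜ[k] gB)))))
      = OmegaCmap act X1 X2 Y1 Y2 gB
          (((LinearMap.rTensor L (Coalgebra.comul (R := k))) RH)
            ⊗ₜ[k] ((Coalgebra.comul (R := k) bH) ⊗ₜ[k] RG)) := by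
  induction RH using TensorProduct.induction_on with
  | zero => simp only [TensorProduct.zero_tmul, TensorProduct.tmul_zero, map_zero]
  | tmul c l =>
    induction RG using TensorProduct.induction_on with
    | zero => simp only [TensorProduct.zero_tmul, TensorProduct.tmul_zero, map_zero]
    | tmul r0 r1 =>
      rw [Theta_tmul, Theta_tmul]
      simp only [TensorProduct.tensorTensorTensorComm_tmul, TensorProduct.map_tmul,
        LinearMap.rTensor_tmul, smashMul_tmulK]
      induction (Coalgebra.comul (R := k) c) using TensorProduct.induction_on with
      | zero => simp only [TensorProduct.zero_tmul, TensorProduct.tmul_zero, map_zero]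
      | tmul c1 c2 =>
        induction (Coalgebra.comul (R := k) bH) using TensorProduct.induction_on with
        | zero => simp only [TensorProduct.zero_tmul, TensorProduct.tmul_zero, map_zero]
        | tmul b1 b2 => simp [OmegaCmap_tmul, mul_assoc]
        | add u v hu hv => simp only [TensorProduct.tmul_add, TensorProduct.add_tmul, map_add,
            hu, hv]
      | add u v hu hv => simp only [TensorProduct.tmul_add, TensorProduct.add_tmul, map_add,
          hu, hv]
    | add u v hu hv => simp only [TensorProduct.tmul_add, TensorProduct.add_tmul, map_add,
        hu, hv]
  | add u v hu hv => simp only [TensorProduct.add_tmul, TensorProduct.tmul_add, map_add, hu, hv]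

lemma BLr_apply (v : L) (a c : H) :
    BLr act ρ v (a ⊗ₜ[k] c)
      = (LinearMap.lTensor H (LinearMap.mulRight k (act c v))) (ρ a) := by
  simp only [BLr, LinearMap.comp_apply, TensorProduct.map_tmul]
  induction (ρ a) using TensorProduct.induction_on with
  | zero => simp only [TensorProduct.zero_tmul, map_zero]
  | tmul e0 e1 => simp
  | add u v hu hv => simp only [TensorProduct.add_tmul, map_add, hu, hv]

lemma BLl_apply (v : L) (a c : H) :
    BLl act ρ v (a ⊗ₜ[k] c)
      = (LinearMap.lTensor H (LinearMap.mulLeft k (act a v))) (ρ c) := by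
  simp only [BLl, LinearMap.comp_apply, TensorProduct.map_tmul]
  induction (ρ c) using TensorProduct.induction_on with
  | zero => simp only [TensorProduct.tmul_zero, map_zero]
  | tmul e0 e1 => simp
  | add u v hu hv => simp only [TensorProduct.tmul_add, map_add, hu, hv]

open Coalgebra in
lemma stepE (hact : IsPartialAction k H L act) (X1 X2 Y1 Y2 : L) (gB : H)
    (w1 w2 b1 b2 : H) (RG : H ⊗[k] L) (rb1 : Repr k b1 (H × H)) :
    OmegaCmap act X1 X2 Y1 Y2 gB
      (((LinearMap.lTensor (H ⊗[k] H) (LinearMap.mul' k L))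
          ((TensorProduct.tensorTensorTensorComm k H L H L) ((ρ w1) ⊗ₜ[k] (ρ w2))))
        ⊗ₜ[k] ((b1 ⊗ₜ[k] b2) ⊗ₜ[k] RG))
      = ∑ w ∈ rb1.index, OmegaR act ρ X1 X2 Y1 gB
          (((w1 ⊗ₜ[k] (BLr act ρ Y2 (w2 ⊗ₜ[k] rb1.left w)))
            ⊗ₜ[k] (rb1.right w ⊗ₜ[k] b2)) ⊗ₜ[k] RG) := by
  simp only [BLr_apply]
  induction RG using TensorProduct.induction_on with
  | zero => simp only [TensorProduct.tmul_zero, map_zero, Finset.sum_const_zero]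
  | tmul r0 r1 =>
    induction (ρ w2) using TensorProduct.induction_on with
    | zero => simp only [TensorProduct.tmul_zero, TensorProduct.zero_tmul, map_zero,
        Finset.sum_const_zero]
    | tmul e0 e1 =>
      simp only [LinearMap.lTensor_tmul, LinearMap.mulRight_apply, OmegaR_apply]
      induction (ρ w1) using TensorProduct.induction_on with
      | zero => simp only [TensorProduct.zero_tmul, map_zero, Finset.sum_const_zero]
      | tmul d0 d1 =>
        simp only [TensorProduct.tensorTensorTensorComm_tmul, LinearMap.lTensor_tmul,
          LinearMap.mul'_apply, OmegaCmap_tmul, OmegaRcore_tmul]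
        rw [hact.act_mul b1 Y2 r1, ← rb1.eq]
        simp only [map_sum, TensorProduct.sum_tmul, LinearMap.mul'_apply,
          TensorProduct.map_tmul, LinearMap.flip_apply, TensorProduct.tmul_sum,
          Finset.mul_sum, Finset.sum_mul]
        refine Finset.sum_congr rfl fun w _ => ?_
        simp [mul_assoc]
      | add u v hu hv => simp only [TensorProduct.add_tmul, map_add, hu, hv,
          Finset.sum_add_distrib]
    | add u v hu hv =>
      simp only [TensorProduct.tmul_add, TensorProduct.add_tmul, map_add, hu, hv,
        Finset.sum_add_distrib]
  | add u v hu hv => simp only [TensorProduct.tmul_add, map_add, hu, hv,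
      Finset.sum_add_distrib]

section Moves
open Coalgebra

/-- `((a⊗b)⊗((x⊗y)⊗z)) ↦ (a⊗(b⊗x))⊗(y⊗z)`. -/
noncomputable def Lam1 : (H ⊗[k] H) ⊗[k] ((H ⊗[k] H) ⊗[k] H) →ₗ[k] (H ⊗[k] (H ⊗[k] H)) ⊗[k] (H ⊗[k] H) :=
  (LinearMap.rTensor (H ⊗[k] H) (TensorProduct.assoc k H H H).toLinearMap)
    ∘ₗ (TensorProduct.assoc k (H ⊗[k] H) H (H ⊗[k] H)).symm.toLinearMap
    ∘ₗ (LinearMap.lTensor (H ⊗[k] H) (TensorProduct.assoc k H H H).toLinearMap)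

lemma Lam1_tmul (a b x y z : H) :
    Lam1 ((a ⊗ₜ[k] b) ⊗ₜ[k] ((x ⊗ₜ[k] y) ⊗ₜ[k] z))
      = (a ⊗ₜ[k] (b ⊗ₜ[k] x)) ⊗ₜ[k] (y ⊗ₜ[k] z) := by
  simp [Lam1]

/-- `((a⊗b)⊗(c⊗(d⊗e))) ↦ (a⊗(b⊗c))⊗(d⊗e)`. -/
noncomputable def Lam2 : (H ⊗[k] H) ⊗[k] (H ⊗[k] (H ⊗[k] H)) →ₗ[k] (H ⊗[k] (H ⊗[k] H)) ⊗[k] (H ⊗[k] H) :=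
  (LinearMap.rTensor (H ⊗[k] H) (TensorProduct.assoc k H H H).toLinearMap)
    ∘ₗ (TensorProduct.assoc k (H ⊗[k] H) H (H ⊗[k] H)).symm.toLinearMap

lemma Lam2_tmul (a b c d e : H) :
    Lam2 ((a ⊗ₜ[k] b) ⊗ₜ[k] (c ⊗ₜ[k] (d ⊗ₜ[k] e)))
      = (a ⊗ₜ[k] (b ⊗ₜ[k] c)) ⊗ₜ[k] (d ⊗ₜ[k] e) := by
  simp [Lam2]

variable (h : H) (rh : Repr k h (H × H))
  (rA : (i : H × H) → Repr k (rh.left i) (H × H)) (rB : (i : H × H) → Repr k (rh.right i) (H × H))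
  (rB1 : (i : H × H) → (v : H × H) → Repr k ((rB i).left v) (H × H))
  (rB2 : (i : H × H) → (v : H × H) → Repr k ((rB i).right v) (H × H))
  (rF : (i : H × H) → (p : H × H) → Repr k ((rA i).left p) (H × H))
  (rZ : (i : H × H) → (p : H × H) → Repr k ((rA i).right p) (H × H))

lemma moveG2' :
    (∑ i ∈ rh.index, ∑ p ∈ (rA i).index, ∑ v ∈ (rB i).index, ∑ w ∈ (rB1 i v).index,
      ((rA i).left p ⊗ₜ[k] ((rA i).right p ⊗ₜ[k] (rB1 i v).left w))
        ⊗ₜ[k] ((rB1 i v).right w ⊗ₜ[k] (rB i).right v))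
    = ∑ i ∈ rh.index, ∑ p ∈ (rA i).index, ∑ a ∈ (rF i p).index, ∑ c ∈ (rZ i p).index,
      ((rF i p).left a ⊗ₜ[k] ((rF i p).right a ⊗ₜ[k] (rZ i p).left c))
        ⊗ₜ[k] ((rZ i p).right c ⊗ₜ[k] rh.right i) := by
  have hco := Coalgebra.sum_tmul_tmul_eq rh rA rB
  have h2 := congrArg (Lam1 ∘ₗ (TensorProduct.map (Coalgebra.comul (R := k))
      (LinearMap.rTensor H (Coalgebra.comul (R := k))))) hco
  simp only [LinearMap.comp_apply, map_sum, TensorProduct.map_tmul,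
    LinearMap.rTensor_tmul] at h2
  calc
    _ = ∑ i ∈ rh.index, ∑ v ∈ (rB i).index,
          Lam1 ((Coalgebra.comul (R := k) (rh.left i))
            ⊗ₜ[k] ((Coalgebra.comul (R := k) ((rB i).left v)) ⊗ₜ[k] (rB i).right v)) := by
      refine Finset.sum_congr rfl fun i _ => ?_
      rw [Finset.sum_comm]
      refine Finset.sum_congr rfl fun v _ => ?_
      rw [← (rA i).eq, ← (rB1 i v).eq]
      simp only [TensorProduct.sum_tmul, TensorProduct.tmul_sum, map_sum, Lam1_tmul]
      rw [Finset.sum_comm]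
    _ = ∑ i ∈ rh.index, ∑ p ∈ (rA i).index,
          Lam1 ((Coalgebra.comul (R := k) ((rA i).left p))
            ⊗ₜ[k] ((Coalgebra.comul (R := k) ((rA i).right p)) ⊗ₜ[k] rh.right i)) := h2.symm
    _ = _ := by
      refine Finset.sum_congr rfl fun i _ => Finset.sum_congr rfl fun p _ => ?_
      rw [← (rF i p).eq, ← (rZ i p).eq]
      simp only [TensorProduct.sum_tmul, TensorProduct.tmul_sum, map_sum, Lam1_tmul]
      rw [Finset.sum_comm]

lemma Lam1_assoc (x : H ⊗[k] H) (y : H ⊗[k] (H ⊗[k] H)) :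
    Lam1 (x ⊗ₜ[k] ((TensorProduct.assoc k H H H).symm y)) = Lam2 (x ⊗ₜ[k] y) := by
  induction y using TensorProduct.induction_on with
  | zero => simp only [map_zero, TensorProduct.tmul_zero]
  | tmul c de =>
    induction de using TensorProduct.induction_on with
    | zero => simp only [map_zero, TensorProduct.tmul_zero]
    | tmul d e => simp [Lam1, Lam2]
    | add u v hu hv => simp only [TensorProduct.tmul_add, map_add, hu, hv]
  | add u v hu hv => simp only [TensorProduct.add_tmul, map_add, TensorProduct.tmul_add, hu, hv]

lemma moveG1 :
    (∑ i ∈ rh.index, ∑ p ∈ (rA i).index, ∑ v ∈ (rB i).index, ∑ w ∈ (rB1 i v).index,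
      ((rA i).left p ⊗ₜ[k] ((rA i).right p ⊗ₜ[k] (rB1 i v).left w))
        ⊗ₜ[k] ((rB1 i v).right w ⊗ₜ[k] (rB i).right v))
    = ∑ i ∈ rh.index, ∑ p ∈ (rA i).index, ∑ c ∈ (rZ i p).index, ∑ v ∈ (rB i).index,
      ((rA i).left p ⊗ₜ[k] ((rZ i p).left c ⊗ₜ[k] (rZ i p).right c))
        ⊗ₜ[k] ((rB i).left v ⊗ₜ[k] (rB i).right v) := by
  let rF : (i : H × H) → (p : H × H) → Coalgebra.Repr k ((rA i).left p) (H × H) :=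
    fun i p => Coalgebra.Repr.arbitrary k ((rA i).left p)
  have hco := Coalgebra.sum_tmul_tmul_eq rh rA rB
  have h2 := congrArg (Lam2 ∘ₗ (TensorProduct.map (Coalgebra.comul (R := k))
      (LinearMap.lTensor H (Coalgebra.comul (R := k))))) hco
  simp only [LinearMap.comp_apply, map_sum, TensorProduct.map_tmul,
    LinearMap.lTensor_tmul] at h2
  calc
    _ = ∑ i ∈ rh.index,
          Lam1 ((Coalgebra.comul (R := k) (rh.left i))
            ⊗ₜ[k] ((LinearMap.rTensor H (Coalgebra.comul (R := k)))
                (Coalgebra.comul (R := k) (rh.right i)))) := by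
      refine Finset.sum_congr rfl fun i _ => ?_
      conv_rhs => rw [← (rA i).eq, ← (rB i).eq]
      simp only [map_sum, LinearMap.rTensor_tmul, TensorProduct.sum_tmul,
        TensorProduct.tmul_sum]
      conv_rhs => rw [Finset.sum_comm]
      refine Finset.sum_congr rfl fun p _ => Finset.sum_congr rfl fun v _ => ?_
      conv_rhs => rw [← (rB1 i v).eq]
      simp only [TensorProduct.sum_tmul, TensorProduct.tmul_sum, map_sum, Lam1_tmul]
    _ = ∑ i ∈ rh.index, ∑ v ∈ (rB i).index,
          Lam2 ((Coalgebra.comul (R := k) (rh.left i))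
            ⊗ₜ[k] ((rB i).left v ⊗ₜ[k] (Coalgebra.comul (R := k) ((rB i).right v)))) := by
      refine Finset.sum_congr rfl fun i _ => ?_
      rw [← Coalgebra.coassoc_symm_apply, ← (rB i).eq]
      simp only [map_sum, LinearMap.lTensor_tmul, TensorProduct.tmul_sum]
      exact Finset.sum_congr rfl fun v _ => Lam1_assoc _ _
    _ = ∑ i ∈ rh.index, ∑ p ∈ (rA i).index,
          Lam2 ((Coalgebra.comul (R := k) ((rA i).left p))
            ⊗ₜ[k] ((rA i).right p ⊗ₜ[k] (Coalgebra.comul (R := k) (rh.right i)))) := h2.symm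
    _ = ∑ i ∈ rh.index, ∑ v ∈ (rB i).index,
          ((∑ p ∈ (rA i).index, ∑ a ∈ (rF i p).index,
            (rF i p).left a ⊗ₜ[k] ((rF i p).right a ⊗ₜ[k] (rA i).right p))
              ⊗ₜ[k] ((rB i).left v ⊗ₜ[k] (rB i).right v)) := by
      refine Finset.sum_congr rfl fun i _ => ?_
      have lhs : ∀ p ∈ (rA i).index,
          Lam2 ((Coalgebra.comul (R := k) ((rA i).left p))
            ⊗ₜ[k] ((rA i).right p ⊗ₜ[k] (Coalgebra.comul (R := k) (rh.right i))))
          = ∑ a ∈ (rF i p).index, ∑ v ∈ (rB i).index,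
              ((rF i p).left a ⊗ₜ[k] ((rF i p).right a ⊗ₜ[k] (rA i).right p))
                ⊗ₜ[k] ((rB i).left v ⊗ₜ[k] (rB i).right v) := by
        intro p _
        conv_lhs => rw [← (rF i p).eq, ← (rB i).eq]
        simp only [TensorProduct.sum_tmul, TensorProduct.tmul_sum, map_sum, Lam2_tmul]
        exact Finset.sum_comm
      rw [Finset.sum_congr rfl lhs]
      simp only [TensorProduct.sum_tmul]
      exact (Finset.sum_congr rfl fun p _ => Finset.sum_comm).trans Finset.sum_comm
    _ = _ := by
      refine Finset.sum_congr rfl fun i _ => ?_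
      calc
        _ = ∑ v ∈ (rB i).index,
              ((∑ p ∈ (rA i).index, ∑ c ∈ (rZ i p).index,
                (rA i).left p ⊗ₜ[k] ((rZ i p).left c ⊗ₜ[k] (rZ i p).right c))
                  ⊗ₜ[k] ((rB i).left v ⊗ₜ[k] (rB i).right v)) := by
          refine Finset.sum_congr rfl fun v _ => ?_
          rw [Coalgebra.sum_tmul_tmul_eq (rA i) (rF i) (rZ i)]
        _ = _ := by
          simp only [TensorProduct.sum_tmul]
          exact (Finset.sum_comm).trans (Finset.sum_congr rfl fun p _ => Finset.sum_comm)

end Moves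

lemma phiB_apply (f : H) (u : L) :
    phiB k act ρ (f ⊗ₜ[k] u) = (LinearMap.rTensor L (act.flip u)) (ρ f) := by
  simp only [phiB, LinearMap.comp_apply, LinearMap.rTensor_tmul]
  induction (ρ f) using TensorProduct.induction_on with
  | zero => simp only [TensorProduct.zero_tmul, map_zero]
  | tmul d0 d1 => simp [swapR, actT]
  | add a b ha hb => simp only [TensorProduct.add_tmul, map_add, ha, hb]

lemma phiC_apply (f g0 : H) :
    phiC k ρ (f ⊗ₜ[k] g0) = (LinearMap.rTensor L (LinearMap.mulRight k g0)) (ρ f) := by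
  simp only [phiC, LinearMap.comp_apply, LinearMap.rTensor_tmul]
  induction (ρ f) using TensorProduct.induction_on with
  | zero => simp only [TensorProduct.zero_tmul, map_zero]
  | tmul e0 e1 => simp [swapR]
  | add a b ha hb => simp only [TensorProduct.add_tmul, map_add, ha, hb]

lemma bAssemble_eval (F1 F2 : H) (Y1 Y2 : L) :
    bAssemble k act ρ ((F1 ⊗ₜ[k] F2) ⊗ₜ[k] (Y1 ⊗ₜ[k] Y2))
      = (TensorProduct.map (act.flip Y1) (LinearMap.mulRight k (act F2 Y2))) (ρ F1) := by
  simp only [bAssemble, LinearMap.comp_apply, LinearEquiv.coe_coe,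
    TensorProduct.tensorTensorTensorComm_tmul,
    TensorProduct.map_tmul, phiB_apply, actT, TensorProduct.lift.tmul]
  induction (ρ F1) using TensorProduct.induction_on with
  | zero => simp only [map_zero, TensorProduct.zero_tmul]
  | tmul d0 d1 => simp
  | add a b ha hb => simp only [map_add, TensorProduct.add_tmul, ha, hb]

lemma cAssemble_eval (Z1 Z2 g0 : H) (g1 : L) :
    cAssemble k act ρ ((Z1 ⊗ₜ[k] Z2) ⊗ₜ[k] (g0 ⊗ₜ[k] g1))
      = (TensorProduct.map (LinearMap.mulRight k g0) (LinearMap.mulRight k (act Z2 g1))) (ρ Z1) := by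
  simp only [cAssemble, LinearMap.comp_apply, LinearEquiv.coe_coe,
    TensorProduct.tensorTensorTensorComm_tmul,
    TensorProduct.map_tmul, phiC_apply, actT, TensorProduct.lift.tmul]
  induction (ρ Z1) using TensorProduct.induction_on with
  | zero => simp only [map_zero, TensorProduct.zero_tmul]
  | tmul e0 e1 => simp
  | add a b ha hb => simp only [map_add, TensorProduct.add_tmul, ha, hb]

open Coalgebra in
lemma foldKey (X1 X2 Y1 Y2 : L) (G2c F1 F2 Z1 Z2 B : H) (RG : H ⊗[k] L) :
    PhiC X1 X2 (B * G2c)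
      (psiMap k ((bAssemble k act ρ ((F1 ⊗ₜ[k] F2) ⊗ₜ[k] (Y1 ⊗ₜ[k] Y2)))
        ⊗ₜ[k] (cAssemble k act ρ ((Z1 ⊗ₜ[k] Z2) ⊗ₜ[k] RG))))
      = OmegaR act ρ X1 X2 Y1 G2c
          (((F1 ⊗ₜ[k] (BLl act ρ Y2 (F2 ⊗ₜ[k] Z1))) ⊗ₜ[k] (Z2 ⊗ₜ[k] B)) ⊗ₜ[k] RG) := by
  rw [bAssemble_eval, BLl_apply]
  induction RG using TensorProduct.induction_on with
  | zero => simp only [TensorProduct.tmul_zero, map_zero]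
  | tmul g0 g1 =>
    rw [cAssemble_eval]
    induction (ρ Z1) using TensorProduct.induction_on with
    | zero => simp only [map_zero, TensorProduct.tmul_zero, TensorProduct.zero_tmul]
    | tmul e0 e1 =>
      simp only [TensorProduct.map_tmul, LinearMap.lTensor_tmul, LinearMap.mulRight_apply,
        LinearMap.mulLeft_apply, OmegaR_apply]
      induction (ρ F1) using TensorProduct.induction_on with
      | zero => simp only [map_zero, TensorProduct.zero_tmul]
      | tmul d0 d1 =>
        simp only [TensorProduct.map_tmul, LinearMap.flip_apply, LinearMap.mulRight_apply,
          psiMap_tmul, PhiC_tmul, OmegaRcore_tmul]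
        simp [mul_assoc]
      | add a b ha hb => simp only [map_add, TensorProduct.add_tmul, ha, hb]
    | add a b ha hb => simp only [map_add, TensorProduct.add_tmul, TensorProduct.tmul_add,
        ha, hb]
  | add a b ha hb => simp only [TensorProduct.tmul_add, map_add, ha, hb]

open Coalgebra in
lemma mpRHS_expand (G : H) (yy : L) (h' : H) (r : Repr k h' (H × H)) :
    mpRHS k act ρ G yy h' = ∑ p ∈ r.index,
      psiMap k ((betaMap k act ρ yy (r.left p)) ⊗ₜ[k] (gammaMap k act ρ G (r.right p))) := by
  simp only [mpRHS, LinearMap.comp_apply]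
  rw [← r.eq]
  simp [map_sum]

open Coalgebra in
lemma betaMap_expand (yy : L) (h'' : H) (rr : Repr k h'' (H × H)) (ryy : Repr k yy (L × L)) :
    betaMap k act ρ yy h'' = ∑ a ∈ rr.index, ∑ m ∈ ryy.index,
      bAssemble k act ρ ((rr.left a ⊗ₜ[k] rr.right a) ⊗ₜ[k] (ryy.left m ⊗ₜ[k] ryy.right m)) := by
  simp only [betaMap, LinearMap.comp_apply]
  rw [← rr.eq, ← ryy.eq]
  simp [map_sum, TensorProduct.sum_tmul, TensorProduct.tmul_sum]

open Coalgebra in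
lemma gammaMap_expand (G : H) (h'' : H) (rr : Repr k h'' (H × H)) :
    gammaMap k act ρ G h'' = ∑ c ∈ rr.index,
      cAssemble k act ρ ((rr.left c ⊗ₜ[k] rr.right c) ⊗ₜ[k] (ρ G)) := by
  simp only [gammaMap, LinearMap.comp_apply]
  rw [← rr.eq]
  simp [map_sum, TensorProduct.sum_tmul]

end RouteR


section RouteRMain

variable (act : H →ₗ[k] L →ₗ[k] L) (ρ : H →ₗ[k] H ⊗[k] L)

open Coalgebra in
lemma routeR (hact : IsPartialAction k H L act) (hco : IsPartialCoaction k L H ρ)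
    (hqa : IsQuasiAbelian k H L act ρ)
    (x y : L) (h g : H) (rx : Repr k x (L × L)) (rh : Repr k h (H × H)) (rg : Repr k g (H × H)) :
    (TensorProduct.map (smashMul act) (smashMul act))
        ((TensorProduct.tensorTensorTensorComm k (L ⊗[k] H) (L ⊗[k] H) (L ⊗[k] H) (L ⊗[k] H))
          ((smashComul ρ (x ⊗ₜ[k] h)) ⊗ₜ[k] (smashComul ρ (y ⊗ₜ[k] g))))
      = ∑ j ∈ rx.index, ∑ q ∈ rg.index, ∑ i ∈ rh.index,
          PhiC (rx.left j) (rx.right j) (rh.right i * rg.right q)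
            (mpRHS k act ρ (rg.left q) y (rh.left i)) := by
  classical
  let ry : Repr k y (L × L) := Repr.arbitrary k y
  let rA : (i : H × H) → Repr k (rh.left i) (H × H) := fun i => Repr.arbitrary k _
  let rB : (i : H × H) → Repr k (rh.right i) (H × H) := fun i => Repr.arbitrary k _
  let rB1 : (i : H × H) → (v : H × H) → Repr k ((rB i).left v) (H × H) := fun i v => Repr.arbitrary k _
  let rZ : (i : H × H) → (p : H × H) → Repr k ((rA i).right p) (H × H) := fun i p => Repr.arbitrary k _
  let rF : (i : H × H) → (p : H × H) → Repr k ((rA i).left p) (H × H) := fun i p => Repr.arbitrary k _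
  have hsx : smashComul ρ (x ⊗ₜ[k] h)
      = ∑ j ∈ rx.index, ∑ i ∈ rh.index,
          Theta ((rx.left j ⊗ₜ[k] rx.right j) ⊗ₜ[k] ((ρ (rh.left i)) ⊗ₜ[k] rh.right i)) := by
    rw [smashComul_tmul, ← rx.eq, ← rh.eq]
    simp only [map_sum, LinearMap.rTensor_tmul, TensorProduct.sum_tmul,
      TensorProduct.tmul_sum]
    exact Finset.sum_comm
  have hsy : smashComul ρ (y ⊗ₜ[k] g)
      = ∑ m ∈ ry.index, ∑ q ∈ rg.index,
          Theta ((ry.left m ⊗ₜ[k] ry.right m) ⊗ₜ[k] ((ρ (rg.left q)) ⊗ₜ[k] rg.right q)) := by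
    rw [smashComul_tmul, ← ry.eq, ← rg.eq]
    simp only [map_sum, LinearMap.rTensor_tmul, TensorProduct.sum_tmul,
      TensorProduct.tmul_sum]
    exact Finset.sum_comm
  rw [hsx, hsy]
  simp only [TensorProduct.sum_tmul, TensorProduct.tmul_sum, map_sum]
  rw [show (∑ m ∈ ry.index, ∑ q ∈ rg.index, ∑ j ∈ rx.index, ∑ i ∈ rh.index,
      (TensorProduct.map (smashMul act) (smashMul act))
        ((TensorProduct.tensorTensorTensorComm k (L ⊗[k] H) (L ⊗[k] H) (L ⊗[k] H) (L ⊗[k] H))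
          ((Theta ((rx.left j ⊗ₜ[k] rx.right j) ⊗ₜ[k] ((ρ (rh.left i)) ⊗ₜ[k] rh.right i)))
            ⊗ₜ[k] (Theta ((ry.left m ⊗ₜ[k] ry.right m) ⊗ₜ[k] ((ρ (rg.left q)) ⊗ₜ[k] rg.right q))))))
    = ∑ j ∈ rx.index, ∑ q ∈ rg.index, ∑ m ∈ ry.index, ∑ i ∈ rh.index,
      (TensorProduct.map (smashMul act) (smashMul act))
        ((TensorProduct.tensorTensorTensorComm k (L ⊗[k] H) (L ⊗[k] H) (L ⊗[k] H) (L ⊗[k] H))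
          ((Theta ((rx.left j ⊗ₜ[k] rx.right j) ⊗ₜ[k] ((ρ (rh.left i)) ⊗ₜ[k] rh.right i)))
            ⊗ₜ[k] (Theta ((ry.left m ⊗ₜ[k] ry.right m) ⊗ₜ[k] ((ρ (rg.left q)) ⊗ₜ[k] rg.right q)))))
    from ((Finset.sum_congr rfl fun m _ => Finset.sum_comm).trans Finset.sum_comm).trans
      (Finset.sum_congr rfl fun j _ => Finset.sum_comm)]
  refine Finset.sum_congr rfl fun j _ => Finset.sum_congr rfl fun q _ => ?_
  -- per (j, q): chunk over (m, i)
  have e4 : ∀ i, (LinearMap.rTensor L (Coalgebra.comul (R := k))) (ρ (rh.left i))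
      = ∑ p ∈ (rA i).index, (LinearMap.lTensor (H ⊗[k] H) (LinearMap.mul' k L))
          ((TensorProduct.tensorTensorTensorComm k H L H L)
            ((ρ ((rA i).left p)) ⊗ₜ[k] (ρ ((rA i).right p)))) := by
    intro i
    rw [hco.comul_coact, ← (rA i).eq]
    simp only [coactPairMul, LinearMap.comp_apply, map_sum, LinearEquiv.coe_coe,
      TensorProduct.map_tmul]
  calc
    ∑ m ∈ ry.index, ∑ i ∈ rh.index,
      (TensorProduct.map (smashMul act) (smashMul act))
        ((TensorProduct.tensorTensorTensorComm k (L ⊗[k] H) (L ⊗[k] H) (L ⊗[k] H) (L ⊗[k] H))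
          ((Theta ((rx.left j ⊗ₜ[k] rx.right j) ⊗ₜ[k] ((ρ (rh.left i)) ⊗ₜ[k] rh.right i)))
            ⊗ₜ[k] (Theta ((ry.left m ⊗ₜ[k] ry.right m) ⊗ₜ[k] ((ρ (rg.left q)) ⊗ₜ[k] rg.right q)))))
    = ∑ m ∈ ry.index, ∑ i ∈ rh.index, ∑ p ∈ (rA i).index, ∑ v ∈ (rB i).index,
        ∑ w ∈ (rB1 i v).index,
        OmegaR act ρ (rx.left j) (rx.right j) (ry.left m) (rg.right q)
          ((((rA i).left p ⊗ₜ[k] (BLr act ρ (ry.right m) ((rA i).right p ⊗ₜ[k] (rB1 i v).left w)))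
            ⊗ₜ[k] ((rB1 i v).right w ⊗ₜ[k] (rB i).right v)) ⊗ₜ[k] (ρ (rg.left q))) := by
      refine Finset.sum_congr rfl fun m _ => Finset.sum_congr rfl fun i _ => ?_
      rw [stepC, e4 i]
      conv_lhs => rw [← (rB i).eq]
      simp only [TensorProduct.sum_tmul, TensorProduct.tmul_sum, map_sum]
      rw [Finset.sum_comm]
      refine Finset.sum_congr rfl fun p _ => Finset.sum_congr rfl fun v _ => ?_
      exact stepE act ρ hact (rx.left j) (rx.right j) (ry.left m) (ry.right m) (rg.right q)
        ((rA i).left p) ((rA i).right p) ((rB i).left v) ((rB i).right v)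
        (ρ (rg.left q)) (rB1 i v)
    _ = ∑ i ∈ rh.index, ∑ m ∈ ry.index, ∑ p ∈ (rA i).index, ∑ a ∈ (rF i p).index,
        ∑ c ∈ (rZ i p).index,
        OmegaR act ρ (rx.left j) (rx.right j) (ry.left m) (rg.right q)
          ((((rF i p).left a ⊗ₜ[k] (BLl act ρ (ry.right m) ((rF i p).right a ⊗ₜ[k] (rZ i p).left c)))
            ⊗ₜ[k] ((rZ i p).right c ⊗ₜ[k] rh.right i)) ⊗ₜ[k] (ρ (rg.left q))) := by
      refine (Finset.sum_congr rfl fun m _ => ?_).trans Finset.sum_comm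
      set RG := ρ (rg.left q) with hRG
      set Φ : (H ⊗[k] H →ₗ[k] H ⊗[k] L) →
          ((H ⊗[k] (H ⊗[k] H)) ⊗[k] (H ⊗[k] H)) →ₗ[k] (L ⊗[k] H) ⊗[k] (L ⊗[k] H) :=
        fun bl => (OmegaR act ρ (rx.left j) (rx.right j) (ry.left m) (rg.right q))
          ∘ₗ ((TensorProduct.mk k ((H ⊗[k] (H ⊗[k] L)) ⊗[k] (H ⊗[k] H)) (H ⊗[k] L)).flip RG)
          ∘ₗ (LinearMap.rTensor (H ⊗[k] H) (LinearMap.lTensor H bl)) with hPhi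
      have hΦ : ∀ (bl : H ⊗[k] H →ₗ[k] H ⊗[k] L) (w1 : H) (P : H ⊗[k] H) (w4 w5 : H),
          Φ bl ((w1 ⊗ₜ[k] P) ⊗ₜ[k] (w4 ⊗ₜ[k] w5))
            = OmegaR act ρ (rx.left j) (rx.right j) (ry.left m) (rg.right q)
                (((w1 ⊗ₜ[k] (bl P)) ⊗ₜ[k] (w4 ⊗ₜ[k] w5)) ⊗ₜ[k] RG) := by
        intro bl w1 P w4 w5
        simp [hPhi]
      calc
        _ = Φ (BLr act ρ (ry.right m))
              (∑ i ∈ rh.index, ∑ p ∈ (rA i).index, ∑ v ∈ (rB i).index,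
                ∑ w ∈ (rB1 i v).index,
                ((rA i).left p ⊗ₜ[k] ((rA i).right p ⊗ₜ[k] (rB1 i v).left w))
                  ⊗ₜ[k] ((rB1 i v).right w ⊗ₜ[k] (rB i).right v)) := by
          simp only [map_sum, hΦ]
        _ = Φ (BLr act ρ (ry.right m))
              (∑ i ∈ rh.index, ∑ p ∈ (rA i).index, ∑ c ∈ (rZ i p).index, ∑ v ∈ (rB i).index,
                ((rA i).left p ⊗ₜ[k] ((rZ i p).left c ⊗ₜ[k] (rZ i p).right c))
                  ⊗ₜ[k] ((rB i).left v ⊗ₜ[k] (rB i).right v)) := by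
          rw [moveG1 h rh rA rB rB1 rZ]
        _ = Φ (BLl act ρ (ry.right m))
              (∑ i ∈ rh.index, ∑ p ∈ (rA i).index, ∑ c ∈ (rZ i p).index, ∑ v ∈ (rB i).index,
                ((rA i).left p ⊗ₜ[k] ((rZ i p).left c ⊗ₜ[k] (rZ i p).right c))
                  ⊗ₜ[k] ((rB i).left v ⊗ₜ[k] (rB i).right v)) := by
          simp only [map_sum]
          refine Finset.sum_congr rfl fun i _ => Finset.sum_congr rfl fun p _ => ?_
          have fold : ∀ (bl : H ⊗[k] H →ₗ[k] H ⊗[k] L),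
              (∑ c ∈ (rZ i p).index, ∑ v ∈ (rB i).index, Φ bl
                (((rA i).left p ⊗ₜ[k] ((rZ i p).left c ⊗ₜ[k] (rZ i p).right c))
                  ⊗ₜ[k] ((rB i).left v ⊗ₜ[k] (rB i).right v)))
              = ∑ v ∈ (rB i).index, Φ bl
                  (((rA i).left p ⊗ₜ[k] (Coalgebra.comul (R := k) ((rA i).right p)))
                    ⊗ₜ[k] ((rB i).left v ⊗ₜ[k] (rB i).right v)) := by
            intro bl
            rw [Finset.sum_comm]
            refine Finset.sum_congr rfl fun v _ => ?_
            rw [← (rZ i p).eq]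
            simp only [TensorProduct.sum_tmul, TensorProduct.tmul_sum, map_sum]
          rw [fold, fold]
          refine Finset.sum_congr rfl fun v _ => ?_
          have := qa_pair act ρ hqa ((rA i).right p) (ry.right m)
          calc
            Φ (BLr act ρ (ry.right m))
                (((rA i).left p ⊗ₜ[k] (Coalgebra.comul (R := k) ((rA i).right p)))
                  ⊗ₜ[k] ((rB i).left v ⊗ₜ[k] (rB i).right v))
              = OmegaR act ρ (rx.left j) (rx.right j) (ry.left m) (rg.right q)
                  ((((rA i).left p ⊗ₜ[k] (BLr act ρ (ry.right m)
                      (Coalgebra.comul (R := k) ((rA i).right p))))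
                    ⊗ₜ[k] ((rB i).left v ⊗ₜ[k] (rB i).right v)) ⊗ₜ[k] RG) := by
                induction (Coalgebra.comul (R := k) ((rA i).right p)) using
                  TensorProduct.induction_on with
                | zero => simp only [map_zero, TensorProduct.tmul_zero,
                    TensorProduct.zero_tmul]
                | tmul z1 z2 => rw [hΦ]
                | add u' v' hu hv => simp only [map_add, TensorProduct.tmul_add,
                    TensorProduct.add_tmul, hu, hv]
            _ = OmegaR act ρ (rx.left j) (rx.right j) (ry.left m) (rg.right q)
                  ((((rA i).left p ⊗ₜ[k] (BLl act ρ (ry.right m)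
                      (Coalgebra.comul (R := k) ((rA i).right p))))
                    ⊗ₜ[k] ((rB i).left v ⊗ₜ[k] (rB i).right v)) ⊗ₜ[k] RG) := by rw [this]
            _ = _ := by
                induction (Coalgebra.comul (R := k) ((rA i).right p)) using
                  TensorProduct.induction_on with
                | zero => simp only [map_zero, TensorProduct.tmul_zero,
                    TensorProduct.zero_tmul]
                | tmul z1 z2 => rw [hΦ]
                | add u' v' hu hv => simp only [map_add, TensorProduct.tmul_add,
                    TensorProduct.add_tmul, hu, hv]
        _ = Φ (BLl act ρ (ry.right m))
              (∑ i ∈ rh.index, ∑ p ∈ (rA i).index, ∑ a ∈ (rF i p).index, ∑ c ∈ (rZ i p).index,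
                ((rF i p).left a ⊗ₜ[k] ((rF i p).right a ⊗ₜ[k] (rZ i p).left c))
                  ⊗ₜ[k] ((rZ i p).right c ⊗ₜ[k] rh.right i)) := by
          rw [← moveG1 h rh rA rB rB1 rZ, moveG2' h rh rA rB rB1 rF rZ]
        _ = _ := by simp only [map_sum, hΦ]
    _ = _ := by
      refine Finset.sum_congr rfl fun i _ => ?_
      rw [mpRHS_expand act ρ (rg.left q) y (rh.left i) (rA i), map_sum]
      calc
        ∑ m ∈ ry.index, ∑ p ∈ (rA i).index, ∑ a ∈ (rF i p).index, ∑ c ∈ (rZ i p).index,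
          OmegaR act ρ (rx.left j) (rx.right j) (ry.left m) (rg.right q)
            ((((rF i p).left a ⊗ₜ[k] (BLl act ρ (ry.right m)
                ((rF i p).right a ⊗ₜ[k] (rZ i p).left c)))
              ⊗ₜ[k] ((rZ i p).right c ⊗ₜ[k] rh.right i)) ⊗ₜ[k] (ρ (rg.left q)))
        = ∑ p ∈ (rA i).index, ∑ c ∈ (rZ i p).index, ∑ a ∈ (rF i p).index, ∑ m ∈ ry.index,
          OmegaR act ρ (rx.left j) (rx.right j) (ry.left m) (rg.right q)
            ((((rF i p).left a ⊗ₜ[k] (BLl act ρ (ry.right m)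
                ((rF i p).right a ⊗ₜ[k] (rZ i p).left c)))
              ⊗ₜ[k] ((rZ i p).right c ⊗ₜ[k] rh.right i)) ⊗ₜ[k] (ρ (rg.left q))) := by
          rw [Finset.sum_comm]
          exact Finset.sum_congr rfl fun p _ =>
            ((Finset.sum_comm.trans (Finset.sum_congr rfl fun a _ => Finset.sum_comm)).trans
              Finset.sum_comm)
        _ = _ := by
          refine Finset.sum_congr rfl fun p _ => ?_
          rw [betaMap_expand act ρ y ((rA i).left p) (rF i p) ry,
            gammaMap_expand act ρ (rg.left q) ((rA i).right p) (rZ i p)]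
          simp only [TensorProduct.sum_tmul, TensorProduct.tmul_sum, map_sum]
          exact Finset.sum_congr rfl fun c _ => Finset.sum_congr rfl fun a _ =>
            Finset.sum_congr rfl fun m _ => (foldKey act ρ (rx.left j) (rx.right j)
              (ry.left m) (ry.right m) (rg.right q) ((rF i p).left a) ((rF i p).right a)
              ((rZ i p).left c) ((rZ i p).right c) (rh.right i) (ρ (rg.left q))).symm


end RouteRMain

/-- Proposition 3.7: for a quasi-abelian partial matched pair `(H, L)`, the
comultiplication `Δ(x # h) = Σ (x₁ # h₁⁰) ⊗ (x₂h₁¹ # h₂)` is multiplicative with respect to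
the smash product `(x # h)(y # g) = Σ x(h₁ ⇀ y) # h₂g` on `L # H = L ⊗ H`. -/
theorem smashComul_multiplicative
    (act : H →ₗ[k] L →ₗ[k] L) (ρ : H →ₗ[k] H ⊗[k] L)
    (hpmp : IsPartialMatchedPair k H L act ρ)
    (hqa : IsQuasiAbelian k H L act ρ) :
    (smashComul ρ) ∘ₗ (smashMul act)
      = (TensorProduct.map (smashMul act) (smashMul act))
          ∘ₗ (TensorProduct.tensorTensorTensorComm k (L ⊗[k] H) (L ⊗[k] H)
                (L ⊗[k] H) (L ⊗[k] H)).toLinearMap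
          ∘ₗ (TensorProduct.map (smashComul ρ) (smashComul ρ)) := by
  apply TensorProduct.ext_fourfold'
  intro x h y g
  simp only [LinearMap.comp_apply, TensorProduct.map_tmul, LinearEquiv.coe_coe]
  rw [routeL act ρ x y h g (Coalgebra.Repr.arbitrary k x) (Coalgebra.Repr.arbitrary k h)
      (Coalgebra.Repr.arbitrary k g) (fun i => Coalgebra.Repr.arbitrary k _)
      (fun i => Coalgebra.Repr.arbitrary k _),
    routeR act ρ hpmp.action hpmp.coaction hqa x y h g (Coalgebra.Repr.arbitrary k x)
      (Coalgebra.Repr.arbitrary k h) (Coalgebra.Repr.arbitrary k g)]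
  simp only [hpmp.compat]


end SmashProduct

end PartialHopf
end

section
/- Let (H, L) be a quasi-abelian partial matched pair. Then for all h ∈ H: Σ ε_H(h₁⁰)h₁¹(h₂ ⇀ 1_L) = Σ ε_L(h₁⁰ ⇀ 1_L)h₁¹(h₂ ⇀ 1_L) in L. -/
open TensorProduct LinearMap

namespace PartialHopf
variable (k : Type*) [Field k]

section AuxProof

open Coalgebra

variable {k H L : Type*} [Field k] [Ring H] [HopfAlgebra k H] [Ring L] [HopfAlgebra k L]

/-- Collapse `M ⊗ N → N` by a functional on `M`. -/
noncomputable def lcol {M N : Type*} [AddCommGroup M] [Module k M]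
    [AddCommGroup N] [Module k N] (φ : M →ₗ[k] k) : M ⊗[k] N →ₗ[k] N :=
  (TensorProduct.lid k N).toLinearMap ∘ₗ LinearMap.rTensor N φ

@[simp] lemma lcol_tmul {M N : Type*} [AddCommGroup M] [Module k M]
    [AddCommGroup N] [Module k N] (φ : M →ₗ[k] k) (m : M) (n : N) :
    lcol φ (m ⊗ₜ[k] n) = φ m • n := rfl

lemma lcol_lTensor {M N N' : Type*} [AddCommGroup M] [Module k M]
    [AddCommGroup N] [Module k N] [AddCommGroup N'] [Module k N']
    (φ : M →ₗ[k] k) (f : N →ₗ[k] N') (t : M ⊗[k] N) :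
    lcol φ (LinearMap.lTensor M f t) = f (lcol φ t) := by
  induction t using TensorProduct.induction_on with
  | zero => simp
  | tmul m n => simp
  | add s t hs ht => simp [hs, ht]

/-- Convolution product of two linear maps `H →ₗ[k] L`. -/
noncomputable def conv (f g : H →ₗ[k] L) : H →ₗ[k] L :=
  LinearMap.mul' k L ∘ₗ TensorProduct.map f g ∘ₗ Coalgebra.comul

lemma conv_apply' (f g : H →ₗ[k] L) (h : H) :
    conv f g h = LinearMap.mul' k L (TensorProduct.map f g (Coalgebra.comul (R := k) h)) := rfl

lemma conv_repr (f g : H →ₗ[k] L) {h : H} (r : Coalgebra.Repr k h (H × H)) :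
    conv f g h = ∑ i ∈ r.index, f (r.left i) * g (r.right i) := by
  rw [conv_apply', ← r.eq]
  simp [TensorProduct.map_tmul, LinearMap.mul'_apply]

lemma conv_assoc (f g j : H →ₗ[k] L) : conv (conv f g) j = conv f (conv g j) := by
  ext h
  have r : Coalgebra.Repr k h (H × H) := Coalgebra.Repr.arbitrary k h
  have key := Coalgebra.sum_tmul_tmul_eq r
    (fun i => Coalgebra.Repr.arbitrary k (r.left i))
    (fun i => Coalgebra.Repr.arbitrary k (r.right i))
  have key2 := congrArg
    (LinearMap.mul' k L ∘ₗ TensorProduct.map f (LinearMap.mul' k L ∘ₗ TensorProduct.map g j)) key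
  simp only [map_sum, LinearMap.comp_apply, TensorProduct.map_tmul,
    LinearMap.mul'_apply] at key2
  rw [conv_repr f (conv g j) r, conv_repr (conv f g) j r]
  calc ∑ i ∈ r.index, conv f g (r.left i) * j (r.right i)
      = ∑ i ∈ r.index, ∑ i2 ∈ (Coalgebra.Repr.arbitrary k (r.left i)).index,
          f ((Coalgebra.Repr.arbitrary k (r.left i)).left i2) *
            (g ((Coalgebra.Repr.arbitrary k (r.left i)).right i2) * j (r.right i)) := by
        refine Finset.sum_congr rfl fun i _ => ?_
        rw [conv_repr f g (Coalgebra.Repr.arbitrary k (r.left i)), Finset.sum_mul]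
        simp [mul_assoc]
    _ = ∑ i ∈ r.index, ∑ i2 ∈ (Coalgebra.Repr.arbitrary k (r.right i)).index,
          f (r.left i) * (g ((Coalgebra.Repr.arbitrary k (r.right i)).left i2) *
            j ((Coalgebra.Repr.arbitrary k (r.right i)).right i2)) := key2
    _ = ∑ i ∈ r.index, f (r.left i) * conv g j (r.right i) := by
        refine Finset.sum_congr rfl fun i _ => ?_
        rw [conv_repr g j (Coalgebra.Repr.arbitrary k (r.right i)), Finset.mul_sum]

lemma lcol_counit_comul (y : L) :
    lcol (Coalgebra.counit (R := k)) (Coalgebra.comul (R := k) y) = y := by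
  simp [lcol, Coalgebra.rTensor_counit_comul]

/-- Scalar convolution of two functionals on `H`. -/
noncomputable def sconv (φ ψ : H →ₗ[k] k) : H →ₗ[k] k :=
  LinearMap.mul' k k ∘ₗ TensorProduct.map φ ψ ∘ₗ Coalgebra.comul

lemma sconv_repr (φ ψ : H →ₗ[k] k) {h : H} (r : Coalgebra.Repr k h (H × H)) :
    sconv φ ψ h = ∑ i ∈ r.index, φ (r.left i) * ψ (r.right i) := by
  rw [show sconv φ ψ h
      = LinearMap.mul' k k (TensorProduct.map φ ψ (Coalgebra.comul (R := k) h)) from rfl, ← r.eq]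
  simp [TensorProduct.map_tmul, LinearMap.mul'_apply]

lemma sconv_counit (φ : H →ₗ[k] k) : sconv φ (Coalgebra.counit (R := k)) = φ := by
  ext h
  have r : Coalgebra.Repr k h (H × H) := Coalgebra.Repr.arbitrary k h
  have h1 := congrArg (TensorProduct.rid k H) (Coalgebra.sum_tmul_counit_eq r)
  simp only [map_sum, TensorProduct.rid_tmul, one_smul] at h1
  rw [sconv_repr φ (Coalgebra.counit (R := k)) r]
  calc ∑ i ∈ r.index, φ (r.left i) * Coalgebra.counit (R := k) (r.right i)
      = φ (∑ i ∈ r.index, Coalgebra.counit (R := k) (r.right i) • r.left i) := by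
        simp [map_sum, mul_comm, smul_eq_mul]
    _ = φ h := by rw [h1]

end AuxProof

section AuxProof2

open Coalgebra

variable {k H L : Type*} [Field k] [Ring H] [HopfAlgebra k H] [Ring L] [HopfAlgebra k L]
variable (act : H →ₗ[k] L →ₗ[k] L) (ρ : H →ₗ[k] H ⊗[k] L)

/-- `ε_L(- ⇀ 1)` as a functional on `H`. -/
noncomputable def cF : H →ₗ[k] k := Coalgebra.counit ∘ₗ act.flip 1

/-- `λ : h ↦ Σ ε_H(h⁰) h¹`. -/
noncomputable def lamM : H →ₗ[k] L := lcol (Coalgebra.counit (R := k)) ∘ₗ ρ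

/-- `μ : h ↦ Σ ε_L(h⁰ ⇀ 1) h¹`. -/
noncomputable def muM : H →ₗ[k] L := lcol (cF act) ∘ₗ ρ

/-- `λ₀ = Σ ε_H(1⁰) 1¹`. -/
noncomputable def lam0 : L := lamM ρ 1

/-- `a : h ↦ h ⇀ λ₀`. -/
noncomputable def aM : H →ₗ[k] L := act.flip (lam0 ρ)

lemma lamM_eq_coactCounit : lamM ρ = coactCounit k ρ := rfl

lemma qaL_eval (y : L) (t : H ⊗[k] L) :
    ((LinearMap.lTensor H (LinearMap.mul' k L))
        ∘ₗ (TensorProduct.assoc k H L L).toLinearMap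
        ∘ₗ (LinearMap.rTensor L (TensorProduct.comm k L H).toLinearMap)
        ∘ₗ (TensorProduct.assoc k L H L).symm.toLinearMap) (y ⊗ₜ[k] t)
      = LinearMap.lTensor H (LinearMap.mulLeft k y) t := by
  induction t using TensorProduct.induction_on with
  | zero => simp only [TensorProduct.tmul_zero, map_zero]
  | tmul g z => simp [LinearMap.mul'_apply]
  | add s t hs ht => simp only [TensorProduct.tmul_add, map_add, hs, ht]

lemma qaR_eval (y : L) (t : H ⊗[k] L) :
    ((LinearMap.lTensor H (LinearMap.mul' k L))
        ∘ₗ (TensorProduct.assoc k H L L).toLinearMap) (t ⊗ₜ[k] y)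
      = LinearMap.lTensor H (LinearMap.mulRight k y) t := by
  induction t using TensorProduct.induction_on with
  | zero => simp only [TensorProduct.zero_tmul, map_zero]
  | tmul g z => simp [LinearMap.mul'_apply]
  | add s t hs ht => simp only [TensorProduct.add_tmul, map_add, hs, ht]

lemma qa_comm (hqa : IsQuasiAbelian k H L act ρ) (φ : H →ₗ[k] k) (x : L) :
    conv (act.flip x) (lcol φ ∘ₗ ρ) = conv (lcol φ ∘ₗ ρ) (act.flip x) := by
  ext h
  have r : Coalgebra.Repr k h (H × H) := Coalgebra.Repr.arbitrary k h
  have hq := congrArg (lcol φ) (hqa h x)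
  have e1 : lcol φ (((LinearMap.lTensor H (LinearMap.mul' k L))
        ∘ₗ (TensorProduct.assoc k H L L).toLinearMap
        ∘ₗ (LinearMap.rTensor L (TensorProduct.comm k L H).toLinearMap)
        ∘ₗ (TensorProduct.assoc k L H L).symm.toLinearMap)
      ((TensorProduct.map (act.flip x) ρ) (Coalgebra.comul (R := k) h)))
      = conv (act.flip x) (lcol φ ∘ₗ ρ) h := by
    rw [← r.eq]
    simp only [map_sum, TensorProduct.map_tmul]
    rw [conv_repr _ _ r]
    refine Finset.sum_congr rfl fun i _ => ?_
    rw [qaL_eval, lcol_lTensor]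
    simp
  have e2 : lcol φ (((LinearMap.lTensor H (LinearMap.mul' k L))
        ∘ₗ (TensorProduct.assoc k H L L).toLinearMap)
      ((TensorProduct.map ρ (act.flip x)) (Coalgebra.comul (R := k) h)))
      = conv (lcol φ ∘ₗ ρ) (act.flip x) h := by
    rw [← r.eq]
    simp only [map_sum, TensorProduct.map_tmul]
    rw [conv_repr _ _ r]
    refine Finset.sum_congr rfl fun i _ => ?_
    rw [qaR_eval, lcol_lTensor]
    simp
  rw [e1, e2] at hq
  exact hq

lemma fold_eval1 (φ ψ : H →ₗ[k] k) (t : H ⊗[k] L) :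
    lcol (LinearMap.mul' k k ∘ₗ TensorProduct.map φ ψ)
      (LinearMap.rTensor L (Coalgebra.comul (R := k)) t) = lcol (sconv φ ψ) t := by
  induction t using TensorProduct.induction_on with
  | zero => simp
  | tmul g z => simp [sconv, conv]
  | add s t hs ht => simp only [map_add, hs, ht]

lemma fold_eval2 (φ ψ : H →ₗ[k] k) (s t : H ⊗[k] L) :
    lcol (LinearMap.mul' k k ∘ₗ TensorProduct.map φ ψ)
      (LinearMap.lTensor (H ⊗[k] H) (LinearMap.mul' k L)
        ((TensorProduct.tensorTensorTensorComm k H L H L).toLinearMap (s ⊗ₜ[k] t)))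
      = lcol φ s * lcol ψ t := by
  induction s using TensorProduct.induction_on with
  | zero => simp only [TensorProduct.zero_tmul, map_zero, zero_mul]
  | add s1 s2 h1 h2 => simp only [TensorProduct.add_tmul, map_add, h1, h2, lcol_tmul, map_add,
      LinearMap.add_apply, add_mul]
  | tmul g z =>
    induction t using TensorProduct.induction_on with
    | zero => simp only [TensorProduct.tmul_zero, map_zero, mul_zero]
    | add t1 t2 h1 h2 => simp only [TensorProduct.tmul_add, map_add, h1, h2, mul_add]
    | tmul g' z' =>
      simp only [LinearEquiv.coe_coe, TensorProduct.tensorTensorTensorComm_tmul,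
        LinearMap.lTensor_tmul, LinearMap.mul'_apply, lcol_tmul, LinearMap.comp_apply,
        TensorProduct.map_tmul]
      rw [smul_mul_assoc, mul_smul_comm, smul_smul]

lemma coact_fold (hco : IsPartialCoaction k L H ρ) (φ ψ : H →ₗ[k] k) (h : H) :
    conv (lcol φ ∘ₗ ρ) (lcol ψ ∘ₗ ρ) h = lcol (sconv φ ψ) (ρ h) := by
  have r : Coalgebra.Repr k h (H × H) := Coalgebra.Repr.arbitrary k h
  have hcc := congrArg (lcol (LinearMap.mul' k k ∘ₗ TensorProduct.map φ ψ)) (hco.comul_coact h)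
  rw [fold_eval1] at hcc
  rw [conv_repr _ _ r, hcc]
  unfold coactPairMul
  rw [← r.eq]
  simp only [map_sum, LinearMap.comp_apply, TensorProduct.map_tmul]
  exact Finset.sum_congr rfl fun i _ => (fold_eval2 φ ψ _ _).symm

end AuxProof2

section AuxProof3

open Coalgebra

variable {k H L : Type*} [Field k] [Ring H] [HopfAlgebra k H] [Ring L] [HopfAlgebra k L]
variable (act : H →ₗ[k] L →ₗ[k] L) (ρ : H →ₗ[k] H ⊗[k] L)

lemma psi_collapse (φ : H →ₗ[k] k) (u : L ⊗[k] L) (t : H ⊗[k] L) :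
    lcol φ (LinearMap.lTensor H (lcol (Coalgebra.counit (R := k) (A := L)))
      (psiMap k (u ⊗ₜ[k] t)))
      = lcol (Coalgebra.counit (R := k)) u * lcol φ t := by
  induction u using TensorProduct.induction_on with
  | zero => simp only [TensorProduct.zero_tmul, map_zero, zero_mul]
  | add u1 u2 h1 h2 => simp only [TensorProduct.add_tmul, map_add, h1, h2, add_mul,
      LinearMap.add_apply]
  | tmul y1 y2 =>
    induction t using TensorProduct.induction_on with
    | zero => simp only [TensorProduct.tmul_zero, map_zero, mul_zero]
    | add t1 t2 h1 h2 => simp only [TensorProduct.tmul_add, map_add, h1, h2, mul_add]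
    | tmul g z =>
      simp only [psiMap, LinearMap.comp_apply, LinearEquiv.coe_coe,
        TensorProduct.tensorTensorTensorComm_tmul, TensorProduct.map_tmul,
        TensorProduct.comm_tmul, LinearMap.mul'_apply, TensorProduct.assoc_tmul,
        LinearMap.lTensor_tmul, lcol_tmul]
      rw [smul_mul_assoc, mul_smul_comm, smul_smul, smul_smul, mul_comm]

lemma e7 (u : L ⊗[k] L) (w : L) :
    lcol (Coalgebra.counit (R := k) (A := L))
      ((LinearMap.lTensor L (LinearMap.mul' k L)) ((TensorProduct.assoc k L L L) (u ⊗ₜ[k] w)))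
      = lcol (Coalgebra.counit (R := k)) u * w := by
  induction u using TensorProduct.induction_on with
  | zero =>
      rw [TensorProduct.zero_tmul, LinearEquiv.map_zero, LinearMap.map_zero, LinearMap.map_zero,
        zero_mul]
  | add u1 u2 h1 h2 => simp only [TensorProduct.add_tmul, map_add, h1, h2, add_mul,
      LinearMap.add_apply]
  | tmul y1 y2 =>
    simp only [TensorProduct.assoc_tmul, LinearMap.lTensor_tmul, LinearMap.mul'_apply, lcol_tmul]
    rw [smul_mul_assoc]

lemma e8 (φ : H →ₗ[k] k) (t : H ⊗[k] L) (w : L) :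
    lcol φ ((LinearMap.lTensor H (LinearMap.mul' k L)) ((TensorProduct.assoc k H L L) (t ⊗ₜ[k] w)))
      = lcol φ t * w := by
  induction t using TensorProduct.induction_on with
  | zero =>
      rw [TensorProduct.zero_tmul, LinearEquiv.map_zero, LinearMap.map_zero, LinearMap.map_zero,
        zero_mul]
  | add t1 t2 h1 h2 => simp only [TensorProduct.add_tmul, map_add, h1, h2, add_mul,
      LinearMap.add_apply]
  | tmul g z =>
    simp only [TensorProduct.assoc_tmul, LinearMap.lTensor_tmul, LinearMap.mul'_apply, lcol_tmul]
    rw [smul_mul_assoc]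

lemma swap_act_eval (y : L) (t : H ⊗[k] L) :
    LinearMap.rTensor L (actT k act) (swapR k H L L (t ⊗ₜ[k] y))
      = LinearMap.rTensor L (act.flip y) t := by
  induction t using TensorProduct.induction_on with
  | zero => simp only [TensorProduct.zero_tmul, map_zero]
  | add t1 t2 h1 h2 => simp only [TensorProduct.add_tmul, map_add, h1, h2]
  | tmul p q =>
    simp only [swapR, LinearMap.comp_apply, LinearEquiv.coe_coe, TensorProduct.assoc_tmul,
      LinearMap.lTensor_tmul, TensorProduct.comm_tmul, TensorProduct.assoc_symm_tmul,
      LinearMap.rTensor_tmul]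
    rfl

lemma phiB_eval (g : H) (y : L) :
    phiB k act ρ (g ⊗ₜ[k] y) = LinearMap.rTensor L (act.flip y) (ρ g) := by
  unfold phiB
  simp only [LinearMap.comp_apply, LinearMap.rTensor_tmul]
  exact swap_act_eval act y (ρ g)

lemma phiC_one (g : H) : phiC k ρ (g ⊗ₜ[k] (1 : H)) = ρ g := by
  unfold phiC
  simp only [LinearMap.comp_apply, LinearMap.rTensor_tmul]
  have : ∀ t : H ⊗[k] L,
      LinearMap.rTensor L (LinearMap.mul' k H) (swapR k H L H (t ⊗ₜ[k] (1 : H))) = t := by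
    intro t
    induction t using TensorProduct.induction_on with
    | zero => simp only [TensorProduct.zero_tmul, map_zero]
    | add t1 t2 h1 h2 => simp only [TensorProduct.add_tmul, map_add, h1, h2]
    | tmul p q =>
      simp only [swapR, LinearMap.comp_apply, LinearEquiv.coe_coe, TensorProduct.assoc_tmul,
        LinearMap.lTensor_tmul, TensorProduct.comm_tmul, TensorProduct.assoc_symm_tmul,
        LinearMap.rTensor_tmul, LinearMap.mul'_apply, mul_one]
  exact this (ρ g)

lemma e11 (t : H ⊗[k] L) :
    lcol (Coalgebra.counit (R := k) (A := L)) (LinearMap.rTensor L (act.flip 1) t)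
      = lcol (cF act) t := by
  induction t using TensorProduct.induction_on with
  | zero => simp only [map_zero]
  | add t1 t2 h1 h2 => simp only [map_add, h1, h2]
  | tmul p q => simp only [LinearMap.rTensor_tmul, lcol_tmul]; rfl

lemma zeta_beta (g : H) :
    lcol (Coalgebra.counit (R := k) (A := L)) (betaMap k act ρ 1 g)
      = conv (muM act ρ) (act.flip 1) g := by
  have r : Coalgebra.Repr k g (H × H) := Coalgebra.Repr.arbitrary k g
  unfold betaMap
  simp only [LinearMap.comp_apply, LinearMap.flip_apply, TensorProduct.mk_apply]
  rw [Bialgebra.comul_one, Algebra.TensorProduct.one_def, ← r.eq]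
  rw [TensorProduct.sum_tmul]
  simp only [map_sum]
  rw [conv_repr _ _ r]
  refine Finset.sum_congr rfl fun i _ => ?_
  unfold bAssemble
  simp only [LinearMap.comp_apply, LinearEquiv.coe_coe,
    TensorProduct.tensorTensorTensorComm_tmul, TensorProduct.map_tmul]
  rw [phiB_eval]
  rw [show actT k act (r.right i ⊗ₜ[k] (1 : L)) = act (r.right i) 1 from rfl]
  rw [e7, e11]
  rfl

lemma kphi_gamma (hco1 : ρ 1 = (1 : H) ⊗ₜ[k] (coactCounit k ρ 1)) (φ : H →ₗ[k] k) (g : H) :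
    lcol φ (gammaMap k act ρ 1 g) = conv (lcol φ ∘ₗ ρ) (aM act ρ) g := by
  have r : Coalgebra.Repr k g (H × H) := Coalgebra.Repr.arbitrary k g
  unfold gammaMap
  simp only [LinearMap.comp_apply, LinearMap.flip_apply, TensorProduct.mk_apply]
  rw [hco1, ← r.eq]
  rw [TensorProduct.sum_tmul]
  simp only [map_sum]
  rw [conv_repr _ _ r]
  refine Finset.sum_congr rfl fun i _ => ?_
  unfold cAssemble
  simp only [LinearMap.comp_apply, LinearEquiv.coe_coe,
    TensorProduct.tensorTensorTensorComm_tmul, TensorProduct.map_tmul]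
  rw [phiC_one]
  rw [show actT k act (r.right i ⊗ₜ[k] (coactCounit k ρ 1)) = act (r.right i) (coactCounit k ρ 1)
    from rfl]
  rw [e8]
  rfl

lemma compat_conv (hpmp : IsPartialMatchedPair k H L act ρ) (φ : H →ₗ[k] k) :
    conv (act.flip 1) (lcol φ ∘ₗ ρ)
      = conv (conv (muM act ρ) (act.flip 1)) (conv (lcol φ ∘ₗ ρ) (aM act ρ)) := by
  ext h
  have r : Coalgebra.Repr k h (H × H) := Coalgebra.Repr.arbitrary k h
  have hc := congrArg
    (fun t => lcol φ (LinearMap.lTensor H (lcol (Coalgebra.counit (R := k) (A := L))) t))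
    (hpmp.compat h 1 1)
  have e1 : lcol φ (LinearMap.lTensor H (lcol (Coalgebra.counit (R := k) (A := L)))
      (mpLHS k act ρ 1 1 h)) = conv (act.flip 1) (lcol φ ∘ₗ ρ) h := by
    unfold mpLHS
    simp only [LinearMap.comp_apply]
    rw [← r.eq]
    simp only [map_sum, TensorProduct.map_tmul, LinearMap.comp_apply,
      LinearMap.mulRight_apply, mul_one]
    rw [conv_repr _ _ r]
    refine Finset.sum_congr rfl fun i _ => ?_
    rw [psi_collapse, lcol_counit_comul]
    rfl
  have e2 : lcol φ (LinearMap.lTensor H (lcol (Coalgebra.counit (R := k) (A := L)))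
      (mpRHS k act ρ 1 1 h))
      = conv (conv (muM act ρ) (act.flip 1)) (conv (lcol φ ∘ₗ ρ) (aM act ρ)) h := by
    unfold mpRHS
    simp only [LinearMap.comp_apply]
    rw [← r.eq]
    simp only [map_sum, TensorProduct.map_tmul]
    rw [conv_repr _ _ r]
    refine Finset.sum_congr rfl fun i _ => ?_
    rw [psi_collapse, zeta_beta, kphi_gamma act ρ hpmp.coact_one]
  rw [e1, e2] at hc
  exact hc

lemma conv_ee (hpa : IsPartialAction k H L act) :
    conv (act.flip 1) (act.flip 1) = act.flip 1 := by
  ext h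
  rw [conv_apply', ← hpa.act_mul h 1 1, one_mul]
  rfl

lemma conv_ea (hpa : IsPartialAction k H L act) :
    conv (act.flip 1) (aM act ρ) = aM act ρ := by
  ext h
  rw [conv_apply']
  unfold aM lam0
  rw [← hpa.act_mul h 1 (lamM ρ 1), one_mul]
  rfl

lemma sconv_cF (hpa : IsPartialAction k H L act) :
    sconv (cF act) (cF act) = cF act := by
  ext h
  have r : Coalgebra.Repr k h (H × H) := Coalgebra.Repr.arbitrary k h
  have h1 := congrArg (Coalgebra.counit (R := k)) (hpa.act_mul h 1 1)
  rw [one_mul, ← r.eq] at h1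
  simp only [map_sum, TensorProduct.map_tmul, LinearMap.mul'_apply,
    Bialgebra.counit_mul] at h1
  rw [sconv_repr _ _ r]
  simpa [cF] using h1.symm

lemma convD (hpa : IsPartialAction k H L act) (hco : IsPartialCoaction k L H ρ) :
    conv (muM act ρ) (lamM ρ) = muM act ρ := by
  ext h
  show conv (lcol (cF act) ∘ₗ ρ) (lcol (Coalgebra.counit (R := k)) ∘ₗ ρ) h = _
  rw [coact_fold ρ hco, sconv_counit]
  rfl

lemma convE (hpa : IsPartialAction k H L act) (hco : IsPartialCoaction k L H ρ) :
    conv (muM act ρ) (muM act ρ) = muM act ρ := by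
  ext h
  show conv (lcol (cF act) ∘ₗ ρ) (lcol (cF act) ∘ₗ ρ) h = _
  rw [coact_fold ρ hco, sconv_cF act hpa]
  rfl

end AuxProof3


/-- Lemma 3.11: for a quasi-abelian partial matched pair `(H, L)`,
`Σ ε_H(h₁⁰)h₁¹(h₂ ⇀ 1_L) = Σ ε_L(h₁⁰ ⇀ 1_L)h₁¹(h₂ ⇀ 1_L)` in `L`, for all `h ∈ H`. -/
theorem counit_coact_act_one
    {k H L : Type*} [Field k] [Ring H] [HopfAlgebra k H] [Ring L] [HopfAlgebra k L]
    (act : H →ₗ[k] L →ₗ[k] L) (ρ : H →ₗ[k] H ⊗[k] L)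
    (hpmp : IsPartialMatchedPair k H L act ρ)
    (hqa : IsQuasiAbelian k H L act ρ) :
    ∀ h : H,
      LinearMap.mul' k L
          ((TensorProduct.map (coactCounit k ρ) (act.flip 1)) (Coalgebra.comul (R := k) h))
        = LinearMap.mul' k L
            ((TensorProduct.map
                ((TensorProduct.lid k L).toLinearMap
                  ∘ₗ (LinearMap.rTensor L ((Coalgebra.counit (R := k)) ∘ₗ act.flip 1)) ∘ₗ ρ)
                (act.flip 1))
              (Coalgebra.comul (R := k) h)) := by
  have key : ∀ (e lam mu a : H →ₗ[k] L),
      conv e e = e → conv e a = a →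
      conv e lam = conv lam e → conv e mu = conv mu e →
      conv mu lam = mu → conv mu mu = mu →
      conv e lam = conv (conv mu e) (conv lam a) →
      conv e mu = conv (conv mu e) (conv mu a) →
      conv lam e = conv mu e := by
    intro e lam mu a hA hG hB hC hD hE hF1 hF2
    have hve : conv (conv mu e) e = conv mu e := by rw [conv_assoc, hA]
    have hvlam : conv (conv mu e) lam = conv mu e := by
      rw [conv_assoc, hB, ← conv_assoc, hD]
    have hvmu : conv (conv mu e) mu = conv mu e := by
      rw [conv_assoc, hC, ← conv_assoc, hE]
    have hvv : conv (conv mu e) (conv mu e) = conv mu e := by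
      rw [← conv_assoc, hvmu, hve]
    have h2 : conv (conv mu e) a = conv mu a := by rw [conv_assoc, hG]
    have hva : conv (conv mu e) a = conv mu e := by
      have h1 := hF2
      rw [hC] at h1
      rw [← h2, ← conv_assoc, hvv] at h1
      exact h1.symm
    calc conv lam e = conv e lam := hB.symm
      _ = conv (conv mu e) (conv lam a) := hF1
      _ = conv (conv mu e) (conv lam (conv e a)) := by rw [hG]
      _ = conv (conv (conv mu e) lam) (conv e a) := (conv_assoc _ _ _).symm
      _ = conv (conv mu e) (conv e a) := by rw [hvlam]
      _ = conv (conv mu e) a := by rw [hG]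
      _ = conv mu e := hva
  intro h
  show conv (lamM ρ) (act.flip 1) h = conv (muM act ρ) (act.flip 1) h
  exact LinearMap.congr_fun
    (key (act.flip 1) (lamM ρ) (muM act ρ) (aM act ρ)
      (conv_ee act hpmp.action) (conv_ea act ρ hpmp.action)
      (qa_comm act ρ hqa Coalgebra.counit 1) (qa_comm act ρ hqa (cF act) 1)
      (convD act ρ hpmp.action hpmp.coaction) (convE act ρ hpmp.action hpmp.coaction)
      (compat_conv act ρ hpmp Coalgebra.counit) (compat_conv act ρ hpmp (cF act))) h

end PartialHopf
end

section
/- Let (H, L) be a quasi-abelian partial matched pair satisfying (I): Σ (h⁰⇀1_L) ⊗ S_L(h¹) = Σ ε_H(1_H⁰)ε_L(h⇀1_L)1_L ⊗ 1_H¹ and (II): Σ ε_H(h⁰)(S_H(g)⇀h¹) = Σ ε_L(g⇀1_L)ε_H(h)ε_H(1_H⁰)1_H¹, for all h, g ∈ H. Then ε_L(h ⇀ 1_L) = ε_L(S_H(h) ⇀ 1_L) for all h ∈ H. -/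
open TensorProduct LinearMap

namespace PartialHopf
variable (k : Type*) [Field k]

/-- Lemma 3.12(i): if a quasi-abelian partial matched pair `(H, L)`
satisfies (I) `Σ (h⁰ ⇀ 1_L) ⊗ S_L(h¹) = Σ ε_H(1_H⁰)ε_L(h ⇀ 1_L)1_L ⊗ 1_H¹` and
(II) `Σ ε_H(h⁰)(S_H(g) ⇀ h¹) = Σ ε_L(g ⇀ 1_L)ε_H(h)ε_H(1_H⁰)1_H¹`, then
`ε_L(h ⇀ 1_L) = ε_L(S_H(h) ⇀ 1_L)` for all `h ∈ H`. -/
theorem counit_act_antipode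
    {k H L : Type*} [Field k] [Ring H] [HopfAlgebra k H] [Ring L] [HopfAlgebra k L]
    (act : H →ₗ[k] L →ₗ[k] L) (ρ : H →ₗ[k] H ⊗[k] L)
    (hpmp : IsPartialMatchedPair k H L act ρ)
    (hqa : IsQuasiAbelian k H L act ρ)
    (hI : ∀ h : H,
      (TensorProduct.map (act.flip 1) (HopfAlgebra.antipode (R := k) (A := L))) (ρ h)
        = Coalgebra.counit (R := k) (act h 1) • ((1 : L) ⊗ₜ[k] coactCounit k ρ (1 : H)))
    (hII : ∀ h g : H,
      act (HopfAlgebra.antipode (R := k) g) (coactCounit k ρ h)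
        = (Coalgebra.counit (R := k) (act g 1) * Coalgebra.counit (R := k) h)
            • coactCounit k ρ (1 : H)) :
    ∀ h : H,
      Coalgebra.counit (R := k) (act h 1)
        = Coalgebra.counit (R := k) (act (HopfAlgebra.antipode (R := k) h) 1) := by
  intro h
  -- Step 1: ε_L (λ 1) = 1, where λ 1 = coactCounit k ρ 1.
  have htc := hpmp.coaction.tensor_counit 1
  rw [hpmp.coact_one] at htc
  have hl1 : Coalgebra.counit (R := k) (coactCounit k ρ (1 : H)) = 1 := by
    have h1 := congrArg (Coalgebra.counit (R := k)) htc
    simpa [TensorProduct.rid_tmul, map_smul, Bialgebra.counit_one, smul_eq_mul]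
      using h1
  -- Step 2: apply ε_L to (II) with h := 1, g := h.
  have h2 := congrArg (Coalgebra.counit (R := k)) (hII 1 h)
  rw [hpmp.counit_act] at h2
  simpa [hl1, Bialgebra.counit_one, smul_eq_mul] using h2.symm

end PartialHopf
end

section
/- Let (H, L) be a quasi-abelian partial matched pair satisfying Σ (h⁰⇀1_L) ⊗ S_L(h¹) = Σ ε_H(1_H⁰)ε_L(h⇀1_L)1_L ⊗ 1_H¹ for all h ∈ H. Then h ⇀ 1_L = ε_L(h ⇀ 1_L)1_L for all h ∈ H. -/
open TensorProduct LinearMap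

namespace PartialHopf
variable (k : Type*) [Field k]

lemma counit_antipode_eq {R A : Type*} [CommSemiring R] [Semiring A] [HopfAlgebra R A] (a : A) :
    Coalgebra.counit (R := R) (HopfAlgebra.antipode (R := R) (A := A) a)
      = Coalgebra.counit (R := R) a := by
  classical
  set r := Coalgebra.Repr.arbitrary R a with hr
  have h1 : ∑ i ∈ r.index, Coalgebra.counit (R := R) (r.right i) • r.left i = a := by
    have h := Coalgebra.sum_tmul_counit_eq (R := R) r
    have h' := congrArg (TensorProduct.rid R A) h
    simp only [map_sum, TensorProduct.rid_tmul, one_smul] at h'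
    exact h'
  have h2 := congrArg (Coalgebra.counit (R := R)) (HopfAlgebra.sum_antipode_mul_eq_algebraMap_counit (R := R) r)
  rw [map_sum] at h2
  simp only [Bialgebra.counit_mul] at h2
  have h3 : Coalgebra.counit (R := R) (algebraMap R A (Coalgebra.counit (R := R) a))
      = Coalgebra.counit (R := R) a := by
    rw [Algebra.algebraMap_eq_smul_one, map_smul, Bialgebra.counit_one, smul_eq_mul, mul_one]
  have h4 := congrArg
    (fun z => Coalgebra.counit (R := R) (HopfAlgebra.antipode (R := R) (A := A) z)) h1
  simp only [map_sum, map_smul, smul_eq_mul] at h4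
  rw [← h4, ← h3, ← h2]
  exact Finset.sum_congr rfl (fun i _ => mul_comm _ _)

/-- Lemma 3.12(ii): if a quasi-abelian partial matched pair `(H, L)`
satisfies `Σ (h⁰ ⇀ 1_L) ⊗ S_L(h¹) = Σ ε_H(1_H⁰)ε_L(h ⇀ 1_L)1_L ⊗ 1_H¹` for all `h`,
then `h ⇀ 1_L = ε_L(h ⇀ 1_L)1_L` for all `h ∈ H`. -/
theorem act_one_eq_scalar
    {k H L : Type*} [Field k] [Ring H] [HopfAlgebra k H] [Ring L] [HopfAlgebra k L]
    (act : H →ₗ[k] L →ₗ[k] L) (ρ : H →ₗ[k] H ⊗[k] L)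
    (hpmp : IsPartialMatchedPair k H L act ρ)
    (hqa : IsQuasiAbelian k H L act ρ)
    (hI : ∀ h : H,
      (TensorProduct.map (act.flip 1) (HopfAlgebra.antipode (R := k) (A := L))) (ρ h)
        = Coalgebra.counit (R := k) (act h 1) • ((1 : L) ⊗ₜ[k] coactCounit k ρ (1 : H))) :
    ∀ h : H, act h 1 = Coalgebra.counit (R := k) (act h 1) • (1 : L) := by
  intro h
  have hmap : ((TensorProduct.rid k L).toLinearMap
        ∘ₗ (LinearMap.lTensor L (Coalgebra.counit (R := k)))
        ∘ₗ (TensorProduct.map (act.flip 1) (HopfAlgebra.antipode (R := k) (A := L))))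
      = (act.flip (1 : L)) ∘ₗ (TensorProduct.rid k H).toLinearMap
          ∘ₗ (LinearMap.lTensor H (Coalgebra.counit (R := k))) := by
    apply TensorProduct.ext'
    intro x y
    simp [counit_antipode_eq]
  have hLHS : (TensorProduct.rid k L) ((LinearMap.lTensor L (Coalgebra.counit (R := k)))
      ((TensorProduct.map (act.flip 1) (HopfAlgebra.antipode (R := k) (A := L))) (ρ h)))
      = act h 1 := by
    have h' := LinearMap.congr_fun hmap (ρ h)
    simp only [LinearMap.comp_apply, LinearEquiv.coe_coe] at h'
    rw [h', hpmp.coaction.tensor_counit h]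
    simp
  have ht : Coalgebra.counit (R := k) (coactCounit k ρ (1 : H)) = 1 := by
    have hmap2 : ((Coalgebra.counit (R := k) (A := L)) ∘ₗ (TensorProduct.lid k L).toLinearMap
          ∘ₗ (LinearMap.rTensor L (Coalgebra.counit (R := k) (A := H))))
        = ((Coalgebra.counit (R := k) (A := H)) ∘ₗ (TensorProduct.rid k H).toLinearMap
          ∘ₗ (LinearMap.lTensor H (Coalgebra.counit (R := k) (A := L)))) := by
      apply TensorProduct.ext'
      intro x y
      simp [mul_comm]
    have h' := LinearMap.congr_fun hmap2 (ρ 1)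
    simp only [LinearMap.comp_apply, LinearEquiv.coe_coe] at h'
    rw [show coactCounit k ρ (1 : H)
        = (TensorProduct.lid k L) ((LinearMap.rTensor L (Coalgebra.counit (R := k))) (ρ 1))
      from rfl]
    rw [h', hpmp.coaction.tensor_counit (1 : H)]
    simp
  have key := congrArg (fun z : L ⊗[k] L =>
    (TensorProduct.rid k L) ((LinearMap.lTensor L (Coalgebra.counit (R := k))) z)) (hI h)
  simp only [map_smul, LinearMap.lTensor_tmul, TensorProduct.rid_tmul] at key
  rw [hLHS] at key
  rw [key, ht]
  simp

end PartialHopf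
end

section
/- Let L be a Hopf algebra and z ∈ L satisfy ε_L(z) = 1 and z ⊗ z = Δ_L(z)(1_L ⊗ z). Then S_L(z) = z, where S_L is the antipode of L. -/
open TensorProduct HopfAlgebra Coalgebra

section Aux

variable {k L : Type*} [Field k] [Ring L] [HopfAlgebra k L]

/-- `m ∘ (S ⊗ id)` pulls a right multiplier `1 ⊗ z` out. -/
lemma aux_rT (z : L) (t : L ⊗[k] L) :
    LinearMap.mul' k L ((antipode (R := k)).rTensor L (t * ((1 : L) ⊗ₜ[k] z))) =
      LinearMap.mul' k L ((antipode (R := k)).rTensor L t) * z := by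
  induction t using TensorProduct.induction_on with
  | zero => simp
  | tmul a b => simp [Algebra.TensorProduct.tmul_mul_tmul, mul_assoc]
  | add x y hx hy => simp [add_mul, hx, hy]

/-- `m ∘ (id ⊗ S)` pulls a left multiplier `w ⊗ 1` out. -/
lemma aux_lT (w : L) (t : L ⊗[k] L) :
    LinearMap.mul' k L ((antipode (R := k)).lTensor L ((w ⊗ₜ[k] (1 : L)) * t)) =
      w * LinearMap.mul' k L ((antipode (R := k)).lTensor L t) := by
  induction t using TensorProduct.induction_on with
  | zero => simp
  | tmul a b => simp [Algebra.TensorProduct.tmul_mul_tmul, mul_assoc]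
  | add x y hx hy => simp [mul_add, hx, hy]

/-- `id ⊗ Δ` sends `t * (1 ⊗ z)` to `(id ⊗ Δ) t * (1 ⊗ Δ z)`. -/
lemma aux_lT_comul (z : L) (t : L ⊗[k] L) :
    (Coalgebra.comul (R := k)).lTensor L (t * ((1 : L) ⊗ₜ[k] z)) =
      ((Coalgebra.comul (R := k)).lTensor L t) *
        ((1 : L) ⊗ₜ[k] (Coalgebra.comul (R := k) z)) := by
  induction t using TensorProduct.induction_on with
  | zero => simp
  | tmul a b => simp [Algebra.TensorProduct.tmul_mul_tmul]
  | add x y hx hy => simp [add_mul, hx, hy]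

noncomputable def Psi : L ⊗[k] (L ⊗[k] L) →ₗ[k] L ⊗[k] L :=
  ((LinearMap.mul' k L ∘ₗ (antipode (R := k)).rTensor L).rTensor L) ∘ₗ
    (TensorProduct.assoc k L L L).symm.toLinearMap

@[simp] lemma Psi_tmul (a b c : L) :
    Psi (k := k) (a ⊗ₜ[k] (b ⊗ₜ[k] c)) = (antipode (R := k) a * b) ⊗ₜ[k] c := by
  simp [Psi]

/-- `Psi` pulls a right multiplier `1 ⊗ s` out. -/
lemma Psi_mul (t : L ⊗[k] (L ⊗[k] L)) (s : L ⊗[k] L) :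
    Psi (k := k) (t * ((1 : L) ⊗ₜ[k] s)) = Psi (k := k) t * s := by
  induction t using TensorProduct.induction_on with
  | zero => simp
  | tmul a q =>
      induction q using TensorProduct.induction_on with
      | zero => simp
      | tmul b c =>
          induction s using TensorProduct.induction_on with
          | zero => simp
          | tmul p r =>
              simp [Algebra.TensorProduct.tmul_mul_tmul, mul_assoc]
          | add u v hu hv =>
              simp only [TensorProduct.tmul_add, mul_add, map_add, hu, hv]
      | add u v hu hv =>
          rw [Algebra.TensorProduct.tmul_mul_tmul, mul_one] at hu hv
          rw [Algebra.TensorProduct.tmul_mul_tmul, mul_one, add_mul,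
            TensorProduct.tmul_add, map_add, hu, hv, TensorProduct.tmul_add,
            map_add, add_mul]
  | add x y hx hy => simp [add_mul, hx, hy]

lemma Psi_left (z : L) (q : L ⊗[k] L) :
    Psi (k := k) (z ⊗ₜ[k] q) = ((antipode (R := k) z) ⊗ₜ[k] (1 : L)) * q := by
  induction q using TensorProduct.induction_on with
  | zero => simp
  | tmul b c => simp [Algebra.TensorProduct.tmul_mul_tmul]
  | add u v hu hv => simp only [TensorProduct.tmul_add, mul_add, map_add, hu, hv]

/-- a central element gives a central `1 ⊗ z` in `L ⊗ L`. -/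
lemma one_tmul_central (z : L) (hcentral : ∀ x : L, z * x = x * z)
    (t : L ⊗[k] L) : ((1 : L) ⊗ₜ[k] z) * t = t * ((1 : L) ⊗ₜ[k] z) := by
  induction t using TensorProduct.induction_on with
  | zero => simp
  | tmul a b => simp [Algebra.TensorProduct.tmul_mul_tmul, hcentral b]
  | add x y hx hy => simp [mul_add, add_mul, hx, hy]

end Aux

/-- part of the proof of Proposition 3.14: if `z` is a central element of a
Hopf algebra `L` with `ε_L(z) = 1` and `z ⊗ z = Δ_L(z)(1_L ⊗ z)`, then `S_L(z) = z`. -/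
theorem antipode_fixes_partialCoaction_element
    {k L : Type*} [Field k] [Ring L] [HopfAlgebra k L] (z : L)
    (hcentral : ∀ x : L, z * x = x * z)
    (h1 : Coalgebra.counit (R := k) z = 1)
    (h2 : z ⊗ₜ[k] z = Coalgebra.comul (R := k) z * ((1 : L) ⊗ₜ[k] z)) :
    HopfAlgebra.antipode (R := k) z = z := by
  -- Step 1 : S(z) * z = z
  have e1 : antipode (R := k) z * z = z := by
    have h := congrArg (fun t => LinearMap.mul' k L ((antipode (R := k)).rTensor L t)) h2
    simp only [aux_rT, mul_antipode_rTensor_comul_apply, h1, map_one, one_mul] at h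
    simpa using h
  -- Step 2 : (S z ⊗ 1) * Δ z = (1 ⊗ z) * Δ z
  have hA : z ⊗ₜ[k] (Coalgebra.comul (R := k) z) =
      ((Coalgebra.comul (R := k)).lTensor L (Coalgebra.comul (R := k) z)) *
        ((1 : L) ⊗ₜ[k] (Coalgebra.comul (R := k) z)) := by
    have h := congrArg ((Coalgebra.comul (R := k)).lTensor L) h2
    simpa [aux_lT_comul] using h
  have hPsiT : Psi (k := k)
      ((Coalgebra.comul (R := k)).lTensor L (Coalgebra.comul (R := k) z)) =
      (1 : L) ⊗ₜ[k] z := by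
    have hcoassoc := Coalgebra.coassoc_symm_apply (R := k) (A := L) z
    rw [Psi, LinearMap.comp_apply, LinearEquiv.coe_coe, hcoassoc,
      ← LinearMap.comp_apply, ← LinearMap.rTensor_comp]
    have hax : (LinearMap.mul' k L ∘ₗ (antipode (R := k)).rTensor L) ∘ₗ
        Coalgebra.comul = (Algebra.linearMap k L) ∘ₗ Coalgebra.counit := by
      rw [LinearMap.comp_assoc]; exact HopfAlgebra.mul_antipode_rTensor_comul
    rw [hax, LinearMap.rTensor_comp, LinearMap.comp_apply,
      Coalgebra.rTensor_counit_comul]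
    simp
  have hstar : ((antipode (R := k) z) ⊗ₜ[k] (1 : L)) * Coalgebra.comul (R := k) z =
      z ⊗ₜ[k] z := by
    have h := congrArg (Psi (k := k)) hA
    rw [Psi_left, Psi_mul, hPsiT, one_tmul_central z hcentral, ← h2] at h
    exact h
  -- Step 3 : z * S(z) = S(z)
  have e2 : z * antipode (R := k) z = antipode (R := k) z := by
    have h := congrArg (fun t => LinearMap.mul' k L ((antipode (R := k)).lTensor L t)) hstar
    simp only [aux_lT, mul_antipode_lTensor_comul_apply, h1, map_one, mul_one] at h
    simpa using h.symm
  calc antipode (R := k) z = z * antipode (R := k) z := e2.symm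
    _ = antipode (R := k) z * z := hcentral _
    _ = z := e1
end

section
/- Let H be a Hopf algebra and λ : H → k a linear map with λ(1_H) = 1, λ(h)λ(g) = Σ λ(h₁)λ(h₂g) for all h, g ∈ H, and Σ λ(h₁)h₂ = Σ h₁λ(h₂) for all h ∈ H. Then λ(S_H(h)) = λ(h) for all h ∈ H, where S_H is the antipode. -/
open TensorProduct LinearMap Coalgebra HopfAlgebra

noncomputable section
namespace LamAux

variable {k H : Type*} [Field k] [Ring H] [HopfAlgebra k H]
variable {B : Type*} [Ring B] [Algebra k B]

/-- Convolution product of linear maps from a Hopf algebra to an algebra. -/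
def conv (f g : H →ₗ[k] B) : H →ₗ[k] B :=
  mul' k B ∘ₗ TensorProduct.map f g ∘ₗ comul

lemma conv_apply (f g : H →ₗ[k] B) (h : H) :
    conv f g h = mul' k B (TensorProduct.map f g (comul h)) := rfl

/-- The convolution unit. -/
def cunit : H →ₗ[k] B := Algebra.linearMap k B ∘ₗ counit

lemma mul'_assoc :
    mul' k B ∘ₗ rTensor B (mul' k B) =
      mul' k B ∘ₗ lTensor B (mul' k B) ∘ₗ (TensorProduct.assoc k B B B).toLinearMap := by
  apply TensorProduct.ext_threefold
  intro a b c
  simp [mul_assoc]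

lemma map_conv_left (f g p : H →ₗ[k] B) :
    TensorProduct.map (conv f g) p
      = rTensor B (mul' k B) ∘ₗ TensorProduct.map (TensorProduct.map f g) p
          ∘ₗ rTensor H (comul (R := k)) := by
  apply TensorProduct.ext'
  intro x y
  simp [conv, rTensor_tmul]

lemma map_conv_right (f g p : H →ₗ[k] B) :
    TensorProduct.map p (conv f g)
      = lTensor B (mul' k B) ∘ₗ TensorProduct.map p (TensorProduct.map f g)
          ∘ₗ lTensor H (comul (R := k)) := by
  apply TensorProduct.ext'
  intro x y
  simp [conv, lTensor_tmul]

lemma map_map_assoc (f g p : H →ₗ[k] B) :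
    TensorProduct.map f (TensorProduct.map g p) ∘ₗ (TensorProduct.assoc k H H H).toLinearMap
      = (TensorProduct.assoc k B B B).toLinearMap ∘ₗ
          TensorProduct.map (TensorProduct.map f g) p := by
  apply TensorProduct.ext_threefold
  intro a b c
  simp

lemma conv_assoc (f g p : H →ₗ[k] B) : conv (conv f g) p = conv f (conv g p) := by
  ext h
  have hL : conv (conv f g) p h
      = mul' k B (rTensor B (mul' k B)
          (TensorProduct.map (TensorProduct.map f g) p (rTensor H comul (comul h)))) := by
    rw [conv_apply, map_conv_left]; rfl
  have hR : conv f (conv g p) h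
      = mul' k B (lTensor B (mul' k B)
          (TensorProduct.map f (TensorProduct.map g p) (lTensor H comul (comul h)))) := by
    rw [conv_apply, map_conv_right]; rfl
  rw [hL, hR, ← Coalgebra.coassoc_apply h]
  have := LinearMap.congr_fun (map_map_assoc (k := k) (H := H) f g p)
    (rTensor H comul (comul h))
  simp only [LinearMap.comp_apply, LinearEquiv.coe_coe] at this
  rw [this]
  have := LinearMap.congr_fun (mul'_assoc (k := k) (B := B))
    (TensorProduct.map (TensorProduct.map f g) p (rTensor H comul (comul h)))
  simp only [LinearMap.comp_apply, LinearEquiv.coe_coe] at this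
  rw [this]

lemma mul'_map_algebraMap_left (f : H →ₗ[k] B) :
    mul' k B ∘ₗ TensorProduct.map (Algebra.linearMap k B) f
      = f ∘ₗ (TensorProduct.lid k H).toLinearMap := by
  apply TensorProduct.ext'
  intro r x
  simp only [LinearMap.comp_apply, TensorProduct.map_tmul, mul'_apply,
    Algebra.linearMap_apply, LinearEquiv.coe_coe, TensorProduct.lid_tmul]
  rw [map_smul, Algebra.smul_def]

lemma mul'_map_algebraMap_right (f : H →ₗ[k] B) :
    mul' k B ∘ₗ TensorProduct.map f (Algebra.linearMap k B)
      = f ∘ₗ (TensorProduct.rid k H).toLinearMap := by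
  apply TensorProduct.ext'
  intro x r
  simp only [LinearMap.comp_apply, TensorProduct.map_tmul, mul'_apply,
    Algebra.linearMap_apply, LinearEquiv.coe_coe, TensorProduct.rid_tmul]
  rw [map_smul, Algebra.smul_def, Algebra.commutes]

lemma conv_cunit_left (f : H →ₗ[k] B) : conv cunit f = f := by
  ext h
  have : TensorProduct.map (cunit (k := k) (H := H) (B := B)) f
      = TensorProduct.map (Algebra.linearMap k B) f ∘ₗ rTensor H (counit (R := k)) := by
    apply TensorProduct.ext'; intro x y; simp [cunit]
  rw [conv_apply, this]
  simp only [LinearMap.comp_apply]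
  rw [Coalgebra.rTensor_counit_comul]
  have := LinearMap.congr_fun (mul'_map_algebraMap_left (k := k) (H := H) f)
    ((1 : k) ⊗ₜ[k] h)
  simp only [LinearMap.comp_apply, LinearEquiv.coe_coe] at this
  rw [this]
  simp

lemma conv_cunit_right (f : H →ₗ[k] B) : conv f cunit = f := by
  ext h
  have : TensorProduct.map f (cunit (k := k) (H := H) (B := B))
      = TensorProduct.map f (Algebra.linearMap k B) ∘ₗ lTensor H (counit (R := k)) := by
    apply TensorProduct.ext'; intro x y; simp [cunit]
  rw [conv_apply, this]
  simp only [LinearMap.comp_apply]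
  rw [Coalgebra.lTensor_counit_comul]
  have := LinearMap.congr_fun (mul'_map_algebraMap_right (k := k) (H := H) f)
    (h ⊗ₜ[k] (1 : k))
  simp only [LinearMap.comp_apply, LinearEquiv.coe_coe] at this
  rw [this]
  simp

end LamAux

namespace LamAux
section AntiComul

variable {k H : Type*} [Field k] [Ring H] [HopfAlgebra k H]

/-- `a ⊗ (x ⊗ r) ↦ x ⊗ (a ⊗ r)` -/
def rho2' : H ⊗[k] (H ⊗[k] H) →ₗ[k] H ⊗[k] (H ⊗[k] H) :=
  (TensorProduct.assoc k H H H).toLinearMap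
    ∘ₗ rTensor H (TensorProduct.comm k H H).toLinearMap
    ∘ₗ (TensorProduct.assoc k H H H).symm.toLinearMap

@[simp] lemma rho2'_tmul (a x r : H) :
    rho2' (k := k) (a ⊗ₜ (x ⊗ₜ r)) = x ⊗ₜ (a ⊗ₜ r) := by
  simp [rho2']

/-- `a ⊗ (X ⊗ r) ↦ X ⊗ (a ⊗ r)` with `X` a tensor square element. -/
def rho2 : H ⊗[k] ((H ⊗[k] H) ⊗[k] H) →ₗ[k] (H ⊗[k] H) ⊗[k] (H ⊗[k] H) :=
  (TensorProduct.assoc k (H ⊗[k] H) H H).toLinearMap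
    ∘ₗ rTensor H (TensorProduct.comm k H (H ⊗[k] H)).toLinearMap
    ∘ₗ (TensorProduct.assoc k H (H ⊗[k] H) H).symm.toLinearMap

@[simp] lemma rho2_tmul (a r : H) (X : H ⊗[k] H) :
    rho2 (k := k) (a ⊗ₜ (X ⊗ₜ r)) = X ⊗ₜ (a ⊗ₜ r) := by
  simp [rho2]

/-- `a ⊗ (s ⊗ y) ↦ s ⊗ (a ⊗ y)` -/
def rho3 : H ⊗[k] (k ⊗[k] H) →ₗ[k] k ⊗[k] (H ⊗[k] H) :=
  (TensorProduct.assoc k k H H).toLinearMap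
    ∘ₗ rTensor H (TensorProduct.comm k H k).toLinearMap
    ∘ₗ (TensorProduct.assoc k H k H).symm.toLinearMap

@[simp] lemma rho3_tmul (a y : H) (s : k) :
    rho3 (k := k) (a ⊗ₜ (s ⊗ₜ y)) = s ⊗ₜ (a ⊗ₜ y) := by
  simp [rho3]

end AntiComul
end LamAux
namespace LamAux
section AntiComul2

variable {k H : Type*} [Field k] [Ring H] [HopfAlgebra k H]

lemma mul'_map_comul_comul :
    mul' k (H ⊗[k] H) ∘ₗ TensorProduct.map (comul (R := k)) (comul (R := k))
      = comul ∘ₗ mul' k H := by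
  apply TensorProduct.ext'
  intro a b
  simp only [LinearMap.comp_apply, TensorProduct.map_tmul, mul'_apply,
    Bialgebra.comul_mul]

lemma conv_comul_antipodeR :
    conv (comul (R := k) (A := H)) (comul ∘ₗ antipode (R := k) (A := H)) = cunit := by
  ext h
  have e1 : TensorProduct.map (comul (R := k) (A := H)) (comul (R := k) ∘ₗ antipode (R := k) (A := H))
      = TensorProduct.map (comul (R := k)) (comul (R := k)) ∘ₗ lTensor H (antipode (R := k) (A := H)) := by
    apply TensorProduct.ext'; intro a b
    simp only [LinearMap.comp_apply, TensorProduct.map_tmul, lTensor_tmul]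
  rw [conv_apply, e1]
  simp only [LinearMap.comp_apply]
  have e2 := LinearMap.congr_fun (mul'_map_comul_comul (k := k) (H := H))
    (lTensor H (antipode (R := k) (A := H)) (comul h))
  simp only [LinearMap.comp_apply] at e2
  rw [e2, mul_antipode_lTensor_comul_apply]
  simp [cunit, Algebra.algebraMap_eq_smul_one, Bialgebra.comul_one (R := k) (A := H),
    Algebra.TensorProduct.one_def]

/-- the candidate inverse `h ↦ Σ S(h₂) ⊗ S(h₁)`. -/
def Gmap : H →ₗ[k] H ⊗[k] H :=
  TensorProduct.map (antipode (R := k) (A := H)) (antipode (R := k) (A := H)) ∘ₗ (TensorProduct.comm k H H).toLinearMap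
    ∘ₗ comul (R := k)

lemma conv_G_comul : conv (Gmap (k := k) (H := H)) comul = cunit := by
  set S : H →ₗ[k] H := antipode (R := k) (A := H)
  set Δ : H →ₗ[k] H ⊗[k] H := comul (R := k)
  set m2 : (H ⊗[k] H) ⊗[k] (H ⊗[k] H) →ₗ[k] H ⊗[k] H := mul' k (H ⊗[k] H) with hm2
  set G0 : H ⊗[k] H →ₗ[k] H ⊗[k] H
    := TensorProduct.map S S ∘ₗ (TensorProduct.comm k H H).toLinearMap with hG0
  set X : H ⊗[k] H →ₗ[k] H := mul' k H ∘ₗ rTensor H S with hX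
  -- Q' : a ⊗ (b ⊗ z) ↦ G0(a⊗b) * z
  set Q' : H ⊗[k] (H ⊗[k] (H ⊗[k] H)) →ₗ[k] H ⊗[k] H
    := m2 ∘ₗ rTensor (H ⊗[k] H) G0 ∘ₗ (TensorProduct.assoc k H H (H ⊗[k] H)).symm.toLinearMap
    with hQ'
  ext h
  -- step 0 : decompose the convolution
  have e1 : TensorProduct.map (Gmap (k := k) (H := H)) Δ
      = TensorProduct.map G0 Δ ∘ₗ rTensor H Δ := by
    apply TensorProduct.ext'; intro a b; simp [Gmap, hG0]; rfl
  have step0 : conv (Gmap (k := k) (H := H)) Δ h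
      = m2 (TensorProduct.map G0 Δ (rTensor H Δ (Δ h))) := by
    rw [conv_apply, e1]; rfl
  -- step 1 : coassociativity
  have step1 : rTensor H Δ (Δ h)
      = (TensorProduct.assoc k H H H).symm (lTensor H Δ (Δ h)) :=
    (Coalgebra.coassoc_symm_apply h).symm
  -- KEY1 : regroup
  have key1 : m2 ∘ₗ TensorProduct.map G0 Δ ∘ₗ (TensorProduct.assoc k H H H).symm.toLinearMap
      = Q' ∘ₗ lTensor H (lTensor H Δ) := by
    have := (TensorProduct.assoc k H H H).surjective
    apply LinearMap.cancel_right this |>.mp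
    apply TensorProduct.ext_threefold
    intro a b c
    simp [hQ', mul'_apply]
  -- assemble so far : conv h = Q' (lTensor (lTensor Δ) (lTensor Δ (Δ h)))
  have step2 : conv (Gmap (k := k) (H := H)) Δ h
      = Q' (lTensor H (lTensor H Δ) (lTensor H Δ (Δ h))) := by
    rw [step0, step1]
    exact LinearMap.congr_fun key1 (lTensor H Δ (Δ h))
  -- inner coassoc : lTensor (lTensor Δ) ∘ lTensor Δ = lTensor (lTensor Δ ∘ Δ)
  have step3 : lTensor H (lTensor H Δ) (lTensor H Δ (Δ h))
      = lTensor H ((TensorProduct.assoc k H H H).toLinearMap ∘ₗ rTensor H Δ ∘ₗ Δ) (Δ h) := by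
    rw [Coalgebra.coassoc (R := k) (A := H)]
    rw [← LinearMap.lTensor_comp_apply]
  set u : k →ₗ[k] H := Algebra.linearMap k H with hu
  set ε : H →ₗ[k] k := counit (R := k) with hε
  -- KEY2 : Q' ∘ lTensor assoc = map X X ∘ rho2
  have key2 : Q' ∘ₗ lTensor H (TensorProduct.assoc k H H H).toLinearMap
      = TensorProduct.map X X ∘ₗ rho2 := by
    ext a p q r
    simp [hQ', hX, hG0, hm2, mul'_apply, Algebra.TensorProduct.tmul_mul_tmul]
  -- KEY3 : naturality of rho2
  have key3 : rho2 (k := k) (H := H) ∘ₗ lTensor H (rTensor H Δ)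
      = rTensor (H ⊗[k] H) Δ ∘ₗ rho2' := by
    ext a x r
    simp
  -- KEY4a : absorb Δ into the first factor
  have key4a : TensorProduct.map X X ∘ₗ rTensor (H ⊗[k] H) Δ
      = TensorProduct.map (X ∘ₗ Δ) X := by
    apply TensorProduct.ext'; intro x w
    simp
  -- the antipode axiom
  have key4ax : X ∘ₗ Δ = u ∘ₗ ε := by
    rw [hX, LinearMap.comp_assoc]
    exact HopfAlgebra.mul_antipode_rTensor_comul
  -- KEY4b : split the counit off
  have key4b : TensorProduct.map (u ∘ₗ ε) X
      = TensorProduct.map u X ∘ₗ rTensor (H ⊗[k] H) ε := by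
    apply TensorProduct.ext'; intro x w
    simp
  -- KEY4c : naturality of rho2' w.r.t. the counit
  have key4c : rTensor (H ⊗[k] H) ε ∘ₗ rho2' (k := k) (H := H)
      = rho3 ∘ₗ lTensor H (rTensor H ε) := by
    ext a x r
    simp
  -- KEY5 : final reassembly
  have key5 : TensorProduct.map u X ∘ₗ rho3 ∘ₗ lTensor H ((TensorProduct.mk k k H) 1)
      = (TensorProduct.mk k H H) 1 ∘ₗ X := by
    apply TensorProduct.ext'; intro a y
    simp [hu]
  -- now assemble everything
  have assemble : conv (Gmap (k := k) (H := H)) Δ h = (TensorProduct.mk k H H) 1 (X (Δ h)) := by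
    rw [step2, step3, lTensor_comp, lTensor_comp]
    simp only [LinearMap.comp_apply]
    have k2 := LinearMap.congr_fun key2 ((lTensor H (rTensor H Δ)) ((lTensor H Δ) (Δ h)))
    simp only [LinearMap.comp_apply] at k2
    rw [k2]
    have k3 := LinearMap.congr_fun key3 ((lTensor H Δ) (Δ h))
    simp only [LinearMap.comp_apply] at k3
    rw [k3]
    have k4a := LinearMap.congr_fun key4a (rho2' ((lTensor H Δ) (Δ h)))
    simp only [LinearMap.comp_apply] at k4a
    rw [k4a, key4ax, key4b]
    simp only [LinearMap.comp_apply]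
    have k4c := LinearMap.congr_fun key4c ((lTensor H Δ) (Δ h))
    simp only [LinearMap.comp_apply] at k4c
    rw [k4c, ← LinearMap.lTensor_comp_apply, Coalgebra.rTensor_counit_comp_comul]
    have k5 := LinearMap.congr_fun key5 (Δ h)
    simp only [LinearMap.comp_apply] at k5
    exact k5
  rw [assemble]
  simp only [hX, LinearMap.comp_apply]
  rw [HopfAlgebra.mul_antipode_rTensor_comul_apply]
  simp [cunit, Algebra.algebraMap_eq_smul_one, Algebra.TensorProduct.one_def,
    TensorProduct.tmul_smul]

end AntiComul2
end LamAux
namespace LamAux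
section Main

variable {k H : Type*} [Field k] [Ring H] [HopfAlgebra k H]

/-- The antipode is an anti-coalgebra morphism. -/
theorem comul_antipode :
    comul (R := k) ∘ₗ antipode (R := k) (A := H) = Gmap := by
  have hG : conv (Gmap (k := k) (H := H)) comul = cunit := conv_G_comul
  have hF : conv (comul (R := k) (A := H)) (comul ∘ₗ antipode (R := k) (A := H)) = cunit :=
    conv_comul_antipodeR
  have main : Gmap (k := k) (H := H) = comul ∘ₗ antipode (R := k) (A := H) :=
    calc Gmap (k := k) (H := H)
        = conv Gmap cunit := (conv_cunit_right _).symm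
      _ = conv Gmap (conv comul (comul ∘ₗ antipode (R := k) (A := H))) := by rw [hF]
      _ = conv (conv Gmap comul) (comul ∘ₗ antipode (R := k) (A := H)) := (conv_assoc _ _ _).symm
      _ = conv cunit (comul ∘ₗ antipode (R := k) (A := H)) := by rw [hG]
      _ = comul ∘ₗ antipode (R := k) (A := H) := conv_cunit_left _
  exact main.symm

/-- ending step : `Σ f(h₁) ε(h₂) = f h`. -/
lemma mk_map_counit (f : H →ₗ[k] k) (h : H) :
    mul' k k (TensorProduct.map f (counit (R := k) (A := H)) (comul h)) = f h := by
  have e : mul' k k ∘ₗ TensorProduct.map f (counit (R := k) (A := H))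
      = f ∘ₗ (TensorProduct.rid k H).toLinearMap ∘ₗ lTensor H (counit (R := k) (A := H)) := by
    apply TensorProduct.ext'; intro x y
    simp [mul_comm]
  have := LinearMap.congr_fun e (comul (R := k) h)
  simp only [LinearMap.comp_apply] at this
  rw [this, Coalgebra.lTensor_counit_comul]
  simp

end Main
end LamAux
namespace LamAux
section MainArg

variable {k H : Type*} [Field k] [Ring H] [HopfAlgebra k H] (lam : H →ₗ[k] k)

/-- `h2` rephrased: `λ(a)λ(g) = λ(T_L(a) g)`. -/
lemma star0
    (h2 : ∀ g h : H, lam h * lam g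
      = mul' k k ((TensorProduct.map lam (lam ∘ₗ mulRight k g)) (comul (R := k) h)))
    (a g : H) :
    lam a * lam g
      = lam ((TensorProduct.lid k H) ((rTensor H lam) (comul (R := k) a)) * g) := by
  rw [h2 g a]
  have e : mul' k k ∘ₗ TensorProduct.map lam (lam ∘ₗ mulRight k g)
      = lam ∘ₗ mulRight k g ∘ₗ (TensorProduct.lid k H).toLinearMap ∘ₗ rTensor H lam := by
    apply TensorProduct.ext'; intro x y
    simp [smul_mul_assoc, smul_eq_mul]
  have e2 := LinearMap.congr_fun e (comul (R := k) a)
  simp only [LinearMap.comp_apply] at e2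
  rw [e2]
  simp

/-- `h2 + h3` : `λ(a)λ(g) = λ(T_R(a) g)`. -/
lemma star
    (h2 : ∀ g h : H, lam h * lam g
      = mul' k k ((TensorProduct.map lam (lam ∘ₗ mulRight k g)) (comul (R := k) h)))
    (h3 : ∀ h : H,
      (TensorProduct.lid k H) ((LinearMap.rTensor H lam) (Coalgebra.comul (R := k) h))
        = (TensorProduct.rid k H) ((LinearMap.lTensor H lam) (Coalgebra.comul (R := k) h)))
    (a g : H) :
    lam a * lam g
      = lam ((TensorProduct.rid k H) ((lTensor H lam) (comul (R := k) a)) * g) := by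
  rw [star0 lam h2 a g, h3 a]

/-- the common ending: `Σ f(h₁) λ(ε(h₂)•1) = f(h)`. -/
lemma tail_common (h1 : lam 1 = 1) (f : H →ₗ[k] k) (h : H) :
    lam ((TensorProduct.lid k H)
      (TensorProduct.map f (Algebra.linearMap k H ∘ₗ counit (R := k) (A := H))
        (comul (R := k) h))) = f h := by
  have e4 : lam ∘ₗ (TensorProduct.lid k H).toLinearMap
        ∘ₗ TensorProduct.map f (Algebra.linearMap k H ∘ₗ counit (R := k) (A := H))
      = mul' k k ∘ₗ TensorProduct.map f (counit (R := k) (A := H)) := by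
    apply TensorProduct.ext'; intro x y
    simp [Algebra.algebraMap_eq_smul_one, smul_eq_mul, h1, mul_comm]
  have e5 := LinearMap.congr_fun e4 (comul (R := k) h)
  simp only [LinearMap.comp_apply, LinearEquiv.coe_coe] at e5
  rw [e5, mk_map_counit]

/-- Step A : `λ * (λ∘S) = λ`. -/
lemma lemA (h1 : lam 1 = 1)
    (h2 : ∀ g h : H, lam h * lam g
      = mul' k k ((TensorProduct.map lam (lam ∘ₗ mulRight k g)) (comul (R := k) h)))
    (h : H) :
    mul' k k (TensorProduct.map lam (lam ∘ₗ antipode (R := k) (A := H)) (comul (R := k) h))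
      = lam h := by
  set S : H →ₗ[k] H := antipode (R := k) (A := H) with hS
  set L0 : H ⊗[k] H →ₗ[k] H := (TensorProduct.lid k H).toLinearMap ∘ₗ rTensor H lam with hL0
  set u : k →ₗ[k] H := Algebra.linearMap k H with hu
  -- step 1 : λ(x)λ(S y) = λ(T_L x * S y)
  have sA1 : mul' k k ∘ₗ TensorProduct.map lam (lam ∘ₗ S)
      = lam ∘ₗ mul' k H ∘ₗ TensorProduct.map (L0 ∘ₗ comul) S := by
    apply TensorProduct.ext'; intro x y
    simp only [LinearMap.comp_apply, TensorProduct.map_tmul, mul'_apply]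
    exact star0 lam h2 x (S y)
  have v1 := LinearMap.congr_fun sA1 (comul (R := k) h)
  simp only [LinearMap.comp_apply] at v1
  rw [v1]
  -- step 2 : decompose and coassociate
  have e2 : TensorProduct.map (L0 ∘ₗ comul (R := k)) S
      = TensorProduct.map L0 S ∘ₗ rTensor H (comul (R := k)) := by
    apply TensorProduct.ext'; intro x y; simp
  rw [e2]
  simp only [LinearMap.comp_apply]
  rw [(Coalgebra.coassoc_symm_apply (R := k) h).symm]
  -- step 3 : regroup
  have keyA : mul' k H ∘ₗ TensorProduct.map L0 S
        ∘ₗ (TensorProduct.assoc k H H H).symm.toLinearMap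
      = (TensorProduct.lid k H).toLinearMap
        ∘ₗ TensorProduct.map lam (mul' k H ∘ₗ lTensor H S) := by
    apply (LinearMap.cancel_right (TensorProduct.assoc k H H H).surjective).mp
    apply TensorProduct.ext_threefold
    intro a b c
    simp [hL0, smul_mul_assoc]
  have v2 := LinearMap.congr_fun keyA (lTensor H (comul (R := k)) (comul (R := k) h))
  simp only [LinearMap.comp_apply, LinearEquiv.coe_coe] at v2
  rw [v2]
  -- step 4 : inner antipode axiom
  have e3 : TensorProduct.map lam (mul' k H ∘ₗ lTensor H S) ∘ₗ lTensor H (comul (R := k))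
      = TensorProduct.map lam (mul' k H ∘ₗ lTensor H S ∘ₗ comul (R := k)) := by
    apply TensorProduct.ext'; intro x y; simp
  have v3 := LinearMap.congr_fun e3 (comul (R := k) h)
  simp only [LinearMap.comp_apply] at v3
  rw [v3]
  have eax : mul' k H ∘ₗ lTensor H S ∘ₗ comul (R := k)
      = u ∘ₗ counit (R := k) (A := H) := HopfAlgebra.mul_antipode_lTensor_comul
  rw [eax]
  -- step 5 : finish
  exact tail_common lam h1 lam h

end MainArg
end LamAux
namespace LamAux
section MainArg2

variable {k H : Type*} [Field k] [Ring H] [HopfAlgebra k H] (lam : H →ₗ[k] k)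

/-- Step B : centrality, `λ * f = f * λ` for `f = λ∘S`. -/
lemma lemB
    (h3 : ∀ h : H,
      (TensorProduct.lid k H) ((LinearMap.rTensor H lam) (Coalgebra.comul (R := k) h))
        = (TensorProduct.rid k H) ((LinearMap.lTensor H lam) (Coalgebra.comul (R := k) h)))
    (f : H →ₗ[k] k) (h : H) :
    mul' k k (TensorProduct.map lam f (comul (R := k) h))
      = mul' k k (TensorProduct.map f lam (comul (R := k) h)) := by
  have cB1 : mul' k k ∘ₗ TensorProduct.map lam f
      = f ∘ₗ (TensorProduct.lid k H).toLinearMap ∘ₗ rTensor H lam := by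
    apply TensorProduct.ext'; intro x y
    simp [smul_eq_mul]
  have cB2 : mul' k k ∘ₗ TensorProduct.map f lam
      = f ∘ₗ (TensorProduct.rid k H).toLinearMap ∘ₗ lTensor H lam := by
    apply TensorProduct.ext'; intro x y
    simp [smul_eq_mul, mul_comm]
  have e1 := LinearMap.congr_fun cB1 (comul (R := k) h)
  have e2 := LinearMap.congr_fun cB2 (comul (R := k) h)
  simp only [LinearMap.comp_apply, LinearEquiv.coe_coe] at e1 e2
  rw [e1, e2, h3 h]

/-- Step C : `(λ∘S) * λ = λ∘S`. -/
lemma lemC (h1 : lam 1 = 1)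
    (h2 : ∀ g h : H, lam h * lam g
      = mul' k k ((TensorProduct.map lam (lam ∘ₗ mulRight k g)) (comul (R := k) h)))
    (h3 : ∀ h : H,
      (TensorProduct.lid k H) ((LinearMap.rTensor H lam) (Coalgebra.comul (R := k) h))
        = (TensorProduct.rid k H) ((LinearMap.lTensor H lam) (Coalgebra.comul (R := k) h)))
    (h : H) :
    mul' k k (TensorProduct.map (lam ∘ₗ antipode (R := k) (A := H)) lam (comul (R := k) h))
      = lam (antipode (R := k) (A := H) h) := by
  set S : H →ₗ[k] H := antipode (R := k) (A := H) with hS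
  set TR : H →ₗ[k] H
    := (TensorProduct.rid k H).toLinearMap ∘ₗ lTensor H lam ∘ₗ comul (R := k) with hTR
  set U0 : H ⊗[k] H →ₗ[k] H
    := (TensorProduct.lid k H).toLinearMap ∘ₗ rTensor H (lam ∘ₗ S) with hU0
  set u : k →ₗ[k] H := Algebra.linearMap k H with hu
  -- step 1 : λ(x)λ(y) = λ(T_R(x) y), bilinearised and twisted by S
  have cC1 : mul' k k ∘ₗ TensorProduct.map (lam ∘ₗ S) lam
      = lam ∘ₗ mul' k H ∘ₗ rTensor H (TR ∘ₗ S) := by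
    apply TensorProduct.ext'; intro x y
    simp only [LinearMap.comp_apply, TensorProduct.map_tmul, mul'_apply, rTensor_tmul]
    have := star lam h2 h3 (S x) y
    simp only [hTR, LinearMap.comp_apply]
    exact this
  have v1 := LinearMap.congr_fun cC1 (comul (R := k) h)
  simp only [LinearMap.comp_apply] at v1
  rw [v1]
  -- step 2 : T_R ∘ S = S ∘ U0 ∘ Δ  (uses the anti-comultiplicativity of S)
  have cC2a : (TensorProduct.rid k H).toLinearMap ∘ₗ lTensor H lam
        ∘ₗ TensorProduct.map S S ∘ₗ (TensorProduct.comm k H H).toLinearMap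
      = S ∘ₗ U0 := by
    apply TensorProduct.ext'; intro x y
    simp [hU0]
  have cC2 : TR ∘ₗ S = (S ∘ₗ U0) ∘ₗ comul (R := k) := by
    apply LinearMap.ext; intro x
    have hΔS := LinearMap.congr_fun (comul_antipode (k := k) (H := H)) x
    simp only [LinearMap.comp_apply] at hΔS
    have e := LinearMap.congr_fun cC2a (comul (R := k) x)
    simp only [LinearMap.comp_apply, LinearEquiv.coe_coe] at e
    simp only [LinearMap.comp_apply, hTR, LinearEquiv.coe_coe]
    rw [hΔS]
    simp only [Gmap, LinearMap.comp_apply, LinearEquiv.coe_coe]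
    exact e
  rw [cC2]
  -- step 3 : expand rTensor of the composite and coassociate
  rw [show (S ∘ₗ U0) ∘ₗ comul (R := k) = S ∘ₗ U0 ∘ₗ comul (R := k) from rfl]
  rw [rTensor_comp, rTensor_comp]
  simp only [LinearMap.comp_apply]
  rw [(Coalgebra.coassoc_symm_apply (R := k) h).symm]
  -- step 4 : regroup
  have keyC : mul' k H ∘ₗ rTensor H S ∘ₗ rTensor H U0
        ∘ₗ (TensorProduct.assoc k H H H).symm.toLinearMap
      = (TensorProduct.lid k H).toLinearMap
        ∘ₗ TensorProduct.map (lam ∘ₗ S) (mul' k H ∘ₗ rTensor H S) := by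
    apply (LinearMap.cancel_right (TensorProduct.assoc k H H H).surjective).mp
    apply TensorProduct.ext_threefold
    intro a b c
    simp [hU0, smul_mul_assoc]
  have v2 := LinearMap.congr_fun keyC (lTensor H (comul (R := k)) (comul (R := k) h))
  simp only [LinearMap.comp_apply, LinearEquiv.coe_coe] at v2
  rw [v2]
  -- step 5 : inner antipode axiom
  have e3 : TensorProduct.map (lam ∘ₗ S) (mul' k H ∘ₗ rTensor H S)
        ∘ₗ lTensor H (comul (R := k))
      = TensorProduct.map (lam ∘ₗ S) (mul' k H ∘ₗ rTensor H S ∘ₗ comul (R := k)) := by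
    apply TensorProduct.ext'; intro x y; simp
  have v3 := LinearMap.congr_fun e3 (comul (R := k) h)
  simp only [LinearMap.comp_apply] at v3
  rw [v3]
  have eax : mul' k H ∘ₗ rTensor H S ∘ₗ comul (R := k)
      = u ∘ₗ counit (R := k) (A := H) := HopfAlgebra.mul_antipode_rTensor_comul
  rw [eax]
  -- step 6 : finish
  have := tail_common lam h1 (lam ∘ₗ S) h
  simpa using this

end MainArg2
end LamAux

end

/-- part of the proof of Proposition 3.14: if `λ : H → k` is linear with
`λ(1_H) = 1`, `λ(h)λ(g) = Σ λ(h₁)λ(h₂g)` for all `h, g`, and `Σ λ(h₁)h₂ = Σ h₁λ(h₂)`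
for all `h`, then `λ ∘ S_H = λ`. -/
theorem lam_antipode
    {k H : Type*} [Field k] [Ring H] [HopfAlgebra k H] (lam : H →ₗ[k] k)
    (h1 : lam 1 = 1)
    (h2 : ∀ g h : H,
      lam h * lam g
        = LinearMap.mul' k k
            ((TensorProduct.map lam (lam ∘ₗ LinearMap.mulRight k g))
              (Coalgebra.comul (R := k) h)))
    (h3 : ∀ h : H,
      (TensorProduct.lid k H) ((LinearMap.rTensor H lam) (Coalgebra.comul (R := k) h))
        = (TensorProduct.rid k H) ((LinearMap.lTensor H lam) (Coalgebra.comul (R := k) h))) :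
    ∀ h : H, lam (HopfAlgebra.antipode (R := k) h) = lam h := by
  intro h
  have A := LamAux.lemA lam h1 h2 h
  have B := LamAux.lemB lam h3 (lam ∘ₗ HopfAlgebra.antipode (R := k) (A := H)) h
  have C := LamAux.lemC lam h1 h2 h3 h
  rw [← C, ← B, A]
end
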